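/- arXiv:2102.08276 — 4 statements merged into one kernel-verified Lean document; each statement's English description precedes it below -/
import Mathlib

section
/- Let (X,d) be a DDR finite metric space with orthonormal polynomials Φ_0,…,Φ_N (N = N(X)) for ⟨·,·⟩_X, and D ⊆ X nonempty with frequencies f_k and dual frequencies f̂_i = Σ_{k=0}^n Φ_i(k) f_k. For t ∈ [1..N], D is a t-design (i.e., E(a_D^i) = E(a_X^i) for i = 1,…,t, where a_D is the distance random variable on uniformly random pairs of D) if and only if f̂_i = 0 for i = 1,…,t. -/
/-!
Let `L p = ∑ₖ (f k - v k / |X|) p(k)`. The `i`-th moment condition says `L (X^i) = 0` and,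
since `Φ_i ⊥ Φ_0` and `Φ_0` is a nonzero constant, `f̂_i = L Φ_i` for `i ≥ 1`.
Both families `X^0, …, X^t` and `Φ_0, …, Φ_t` span the polynomials of degree `≤ t`, and
`L 1 = 0` because `f` and `v / |X|` are both probability distributions, so `L` kills all
`X^i` with `i ≤ t` exactly when it kills all `Φ_i` with `i ≤ t`.
-/

open Polynomial Finset

namespace Polynomial

theorem span_image_Iic_eq_degreeLE {K : Type*} [Field K] {Φ : ℕ → K[X]} {t : ℕ}
    (hdeg : ∀ i ≤ t, (Φ i).degree = i) :
    Submodule.span K (Φ '' Set.Iic t) = degreeLE K t := by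
  classical
  -- extend `Φ` beyond `t` to a full polynomial sequence
  let S : Sequence K :=
    ⟨fun i => if i ≤ t then Φ i else X ^ i, fun i => by split_ifs with h <;> simp [hdeg, h]⟩
  have hS : Φ '' Set.Iic t = S '' Set.Iic t :=
    Set.image_congr fun i hi => (if_pos (Set.mem_Iic.mp hi)).symm
  rw [hS, S.span_degreeLE fun i _ => (leadingCoeff_ne_zero.mpr (S.ne_zero i)).isUnit]

theorem degreeLE_le_ker_iff {K M : Type*} [Field K] [AddCommGroup M] [Module K M]
    (L : K[X] →ₗ[K] M) {Φ : ℕ → K[X]} {t : ℕ} (hdeg : ∀ i ≤ t, (Φ i).degree = i) :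
    degreeLE K t ≤ LinearMap.ker L ↔ ∀ i ≤ t, L (Φ i) = 0 := by
  rw [← span_image_Iic_eq_degreeLE hdeg, Submodule.span_le, Set.image_subset_iff]
  rfl

theorem forall_map_X_pow_eq_zero_iff {K M : Type*} [Field K] [AddCommGroup M] [Module K M]
    (L : K[X] →ₗ[K] M) {Φ : ℕ → K[X]} {t : ℕ} (hdeg : ∀ i ≤ t, (Φ i).degree = i) :
    (∀ m ≤ t, L (X ^ m) = 0) ↔ ∀ i ≤ t, L (Φ i) = 0 := by
  rw [← degreeLE_le_ker_iff L hdeg, degreeLE_le_ker_iff L fun m _ => degree_X_pow m]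

theorem sum_smul_leval_apply {ι R : Type*} [CommSemiring R] (s : Finset ι) (g x : ι → R)
    (p : R[X]) : (∑ k ∈ s, g k • leval (x k)) p = ∑ k ∈ s, g k * p.eval (x k) := by
  simp

theorem map_eq_zero_of_degree_le_zero {R M : Type*} [CommSemiring R] [AddCommMonoid M]
    [Module R M] (L : R[X] →ₗ[R] M) (h1 : L 1 = 0) {q : R[X]} (hq : q.degree ≤ 0) : L q = 0 := by
  rw [eq_C_of_degree_le_zero hq, ← mul_one (C _), C_mul', map_smul, h1, smul_zero]

theorem sum_mul_eval_eq_zero_of_orthogonal_const {ι K : Type*} [Field K] {s : Finset ι}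
    {w : ι → K} {x : ι → K} {p q : K[X]} (hq : q.degree = 0)
    (horth : ∑ k ∈ s, w k * p.eval (x k) * q.eval (x k) = 0) :
    ∑ k ∈ s, w k * p.eval (x k) = 0 := by
  have hqC := eq_C_of_degree_eq_zero hq
  have hq0 : q.coeff 0 ≠ 0 := fun h => by rw [h, C_0] at hqC; simp [hqC] at hq
  rw [hqC] at horth
  simp only [eval_C, ← sum_mul] at horth
  exact (mul_eq_zero.mp horth).resolve_right hq0

end Polynomial

theorem Nat.forall_le_iff_forall_one_le {P : ℕ → Prop} {t : ℕ} (h0 : P 0) :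
    (∀ i ≤ t, P i) ↔ ∀ i, 1 ≤ i → i ≤ t → P i :=
  ⟨fun h i _ hi => h i hi, fun h i hi =>
    (Nat.eq_zero_or_pos i).elim (fun hi0 => hi0 ▸ h0) fun hpos => h i hpos hi⟩

section DistanceFrequencies

variable {α : Type*} (d : α → α → ℕ) {n : ℕ}

theorem sum_range_card_filter_eq_card {ι : Type*} (s : Finset ι) (g : ι → ℕ)
    (hg : ∀ i ∈ s, g i ≤ n) :
    ∑ k ∈ range (n + 1), #(s.filter fun i => g i = k) = #s :=
  (card_eq_sum_card_fiberwise fun i hi => mem_range_succ_iff.mpr (hg i hi)).symm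

theorem sum_valency_eq_card [Fintype α] (v : ℕ → ℕ) (x : α) (hdiam : ∀ y, d x y ≤ n)
    (hDDR : ∀ i, #(univ.filter fun y => d x y = i) = v i) :
    ∑ k ∈ range (n + 1), v k = Fintype.card α := by
  simp_rw [← hDDR]
  exact sum_range_card_filter_eq_card _ _ fun y _ => hdiam y

theorem sum_frequencies_eq_one {D : Finset α} (hD : D.Nonempty) (hdiam : ∀ x y, d x y ≤ n) :
    ∑ k ∈ range (n + 1),
      (#((D ×ˢ D).filter fun p => d p.1 p.2 = k) : ℝ) / (#D : ℝ) ^ 2 = 1 := by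
  rw [← sum_div, ← Nat.cast_sum,
    sum_range_card_filter_eq_card _ _ fun p _ => hdiam p.1 p.2, card_product]
  have : (#D : ℝ) ≠ 0 := Nat.cast_ne_zero.mpr hD.card_ne_zero
  field_simp
  push_cast
  ring

end DistanceFrequencies

theorem design_iff_dual_frequencies_vanish_general {X : Type*} [Fintype X]
    (d : X → X → ℕ) (n : ℕ)
    (hdiam : ∀ x y, d x y ≤ n)
    (v : ℕ → ℕ)
    (hDDR : ∀ x i, (Finset.univ.filter fun y => d x y = i).card = v i)
    (N : ℕ)
    (Φ : ℕ → Polynomial ℝ)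
    (hdeg : ∀ i ≤ N, (Φ i).degree = i)
    (horth : ∀ i ≤ N, ∀ j ≤ N,
      (1 / (Fintype.card X : ℝ)) * ∑ k ∈ Finset.range (n + 1),
        (v k : ℝ) * (Φ i).eval (k : ℝ) * (Φ j).eval (k : ℝ) = if i = j then 1 else 0)
    (D : Finset X) (hD : D.Nonempty)
    (f : ℕ → ℝ)
    (hf : ∀ k, f k = ((D ×ˢ D).filter fun p => d p.1 p.2 = k).card / (D.card : ℝ) ^ 2)
    (fhat : ℕ → ℝ)
    (hfhat : ∀ i, fhat i = ∑ k ∈ Finset.range (n + 1), (Φ i).eval (k : ℝ) * f k)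
    (t : ℕ) (htN : t ≤ N) :
    ((∀ i, 1 ≤ i → i ≤ t →
        ∑ j ∈ Finset.range (n + 1), f j * (j : ℝ) ^ i
          = ∑ j ∈ Finset.range (n + 1), ((v j : ℝ) / Fintype.card X) * (j : ℝ) ^ i)
      ↔ (∀ i, 1 ≤ i → i ≤ t → fhat i = 0)) := by
  obtain ⟨x, hx⟩ := hD
  have hX : (Fintype.card X : ℝ) ≠ 0 := Nat.cast_ne_zero.mpr (Fintype.card_pos_iff.mpr ⟨x⟩).ne'
  let L : ℝ[X] →ₗ[ℝ] ℝ :=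
    ∑ k ∈ range (n + 1), (f k - v k / Fintype.card X) • leval (k : ℝ)
  have hL : ∀ p : ℝ[X], L p = ∑ k ∈ range (n + 1), f k * p.eval (k : ℝ)
      - (∑ k ∈ range (n + 1), v k * p.eval (k : ℝ)) / Fintype.card X := fun p => by
    simp only [L, sum_smul_leval_apply, sub_mul, sum_sub_distrib, sum_div, div_mul_eq_mul_div]
  have hL_one : L 1 = 0 := by
    have hv := congrArg (Nat.cast (R := ℝ)) (sum_valency_eq_card d v x (hdiam x) (hDDR x))
    push_cast at hv
    simp only [hL, eval_one, mul_one, hv, div_self hX, hf, sum_frequencies_eq_one d ⟨x, hx⟩ hdiam,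
      sub_self]
  have hΦ0 : (Φ 0).degree = 0 := by simpa using hdeg 0 N.zero_le
  have hL_Φ : ∀ i, 1 ≤ i → i ≤ N → L (Φ i) = fhat i := fun i hi hiN => by
    have hperp : ∑ k ∈ range (n + 1), (v k : ℝ) * (Φ i).eval (k : ℝ) = 0 := by
      refine sum_mul_eval_eq_zero_of_orthogonal_const hΦ0 ?_
      have h := horth i hiN 0 N.zero_le
      rw [if_neg (by omega)] at h
      exact (mul_eq_zero.mp h).resolve_left (by simpa using hX)
    rw [hL, hperp, zero_div, sub_zero, hfhat]
    simp only [mul_comm]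
  calc (∀ i, 1 ≤ i → i ≤ t → _) ↔ ∀ i, 1 ≤ i → i ≤ t → L (Polynomial.X ^ i) = 0 := by
        simp only [hL, eval_pow, eval_X, sub_eq_zero, sum_div, mul_div_right_comm]
    _ ↔ ∀ i ≤ t, L (Polynomial.X ^ i) = 0 :=
        (Nat.forall_le_iff_forall_one_le (by simpa using hL_one)).symm
    _ ↔ ∀ i ≤ t, L (Φ i) = 0 := forall_map_X_pow_eq_zero_iff L fun i hi => hdeg i (hi.trans htN)
    _ ↔ ∀ i, 1 ≤ i → i ≤ t → L (Φ i) = 0 :=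
        Nat.forall_le_iff_forall_one_le (map_eq_zero_of_degree_le_zero L hL_one hΦ0.le)
    _ ↔ _ := by
        refine forall_congr' fun i => imp_congr_right fun hi => imp_congr_right fun hit => ?_
        rw [hL_Φ i hi (hit.trans htN)]

/-- `D ⊆ X` is a `t`-design iff its dual frequencies `f̂_1, …, f̂_t` all vanish. -/
theorem design_iff_dual_frequencies_vanish {X : Type*} [Fintype X] [Nonempty X]
    (d : X → X → ℕ) (n : ℕ)
    (hsymm : ∀ x y, d x y = d y x)
    (hzero : ∀ x y, d x y = 0 ↔ x = y)
    (htri : ∀ x y z, d x y ≤ d x z + d z y)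
    (hdiam : ∀ x y, d x y ≤ n)
    (v : ℕ → ℕ)
    (hDDR : ∀ x i, (Finset.univ.filter fun y => d x y = i).card = v i)
    (N : ℕ) (hN : N ≤ n)
    (Φ : ℕ → Polynomial ℝ)
    (hdeg : ∀ i ≤ N, (Φ i).degree = i)
    (horth : ∀ i ≤ N, ∀ j ≤ N,
      (1 / (Fintype.card X : ℝ)) * ∑ k ∈ Finset.range (n + 1),
        (v k : ℝ) * (Φ i).eval (k : ℝ) * (Φ j).eval (k : ℝ) = if i = j then 1 else 0)
    (D : Finset X) (hD : D.Nonempty)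
    (f : ℕ → ℝ)
    (hf : ∀ k, f k = ((D ×ˢ D).filter fun p => d p.1 p.2 = k).card / (D.card : ℝ) ^ 2)
    (fhat : ℕ → ℝ)
    (hfhat : ∀ i, fhat i = ∑ k ∈ Finset.range (n + 1), (Φ i).eval (k : ℝ) * f k)
    (t : ℕ) (ht1 : 1 ≤ t) (htN : t ≤ N) :
    ((∀ i, 1 ≤ i → i ≤ t →
        ∑ j ∈ Finset.range (n + 1), f j * (j : ℝ) ^ i
          = ∑ j ∈ Finset.range (n + 1), ((v j : ℝ) / Fintype.card X) * (j : ℝ) ^ i)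
      ↔ (∀ i, 1 ≤ i → i ≤ t → fhat i = 0)) :=
  design_iff_dual_frequencies_vanish_general d n hdiam v hDDR N Φ hdeg horth D hD f hf fhat hfhat t
    htN
end

section
/- Let D be a t-design in a DDR finite metric space (X,d) with t ≤ N(X), κ = ⌊t/2⌋, and let λ(x) = (Σ_{i=0}^κ Φ_i(x)²)⁻¹ be the Christoffel function for the orthonormal polynomials Φ_i w.r.t. ⟨·,·⟩_X. Then for all x, |F_D(x) − F_X(x)| ≤ λ(x), where F_D(x) = Σ_{i ≤ x} f_i is the cumulative distribution function of distances in D. -/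
open Polynomial Finset

/-!
Fix `x`. The orthonormal polynomials `Φ₀, …, Φ_κ` of the distance distribution `μ` of `X` yield a
Gauss–Radau quadrature `τ = ∑ₖ wₖ δ_{θₖ}`: its nodes are the eigenvalues of the Jacobi matrix of
multiplication by `X`, with the last diagonal entry shifted so that `x` becomes a node; it
integrates every polynomial of degree `≤ 2r` (some `r ≤ κ`) like `μ`, and its weight at `x` is
exactly `λ(x)`. Since `D` is a `t`-design and `2κ ≤ t`, the distance distribution `ν` of `D` also
integrates these polynomials like `τ`. The Markov–Stieltjes polynomials, Hermite interpolants of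
the step functions `1_{(-∞, x]}` and `1_{(-∞, x)}` at the nodes (of degree `≤ 2r`), majorize resp.
minorize these step functions, so both `μ(-∞, x]` and `ν(-∞, x]` lie between `τ(-∞, x)` and
`τ(-∞, x]`, an interval of length `λ(x)`.
-/

/-! ### Orthonormal polynomials of a linear functional -/

structure IsOrthonormalUpTo (L : ℝ[X] →ₗ[ℝ] ℝ) (Φ : ℕ → ℝ[X]) (r : ℕ) : Prop where
  degree_eq : ∀ i ≤ r, (Φ i).degree = i
  map_mul_eq : ∀ i ≤ r, ∀ j ≤ r, L (Φ i * Φ j) = if i = j then 1 else 0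

namespace IsOrthonormalUpTo

variable {L : ℝ[X] →ₗ[ℝ] ℝ} {Φ : ℕ → ℝ[X]} {r : ℕ}

theorem mono (h : IsOrthonormalUpTo L Φ r) {s : ℕ} (hs : s ≤ r) : IsOrthonormalUpTo L Φ s :=
  ⟨fun i hi => h.degree_eq i (hi.trans hs),
    fun i hi j hj => h.map_mul_eq i (hi.trans hs) j (hj.trans hs)⟩

theorem natDegree_le (h : IsOrthonormalUpTo L Φ r) : ∀ i ≤ r, (Φ i).natDegree ≤ i :=
  fun i hi => (natDegree_eq_of_degree_eq_some (h.degree_eq i hi)).le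

theorem map_sum_smul_mul (h : IsOrthonormalUpTo L Φ r) {d j : ℕ} (hd : d ≤ r + 1) (hj : j < d)
    (a : ℕ → ℝ) : L ((∑ i ∈ range d, a i • Φ i) * Φ j) = a j := by
  rw [Finset.sum_mul, map_sum, Finset.sum_eq_single j]
  · rw [smul_mul_assoc, map_smul, h.map_mul_eq j (by omega) j (by omega), if_pos rfl, smul_eq_mul,
      mul_one]
  · intro i hi hij
    rw [smul_mul_assoc, map_smul, h.map_mul_eq i (by simp at hi; omega) j (by omega), if_neg hij,
      smul_zero]
  · exact fun hj' => absurd (mem_range.mpr hj) hj'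

theorem eq_zero_of_orthogonal (h : IsOrthonormalUpTo L Φ r) {d : ℕ} (hd : d ≤ r + 1)
    {e : ℝ[X]} (he : e.degree < d) (horth : ∀ i < d, L (e * Φ i) = 0) : e = 0 := by
  induction d generalizing e with
  | zero => exact degree_eq_bot.mp (by simpa using he)
  | succ d ih =>
    have hΦ : (Φ d).degree = d := h.degree_eq d (by omega)
    have hlc : (Φ d).coeff d = (Φ d).leadingCoeff := by
      rw [leadingCoeff, natDegree_eq_of_degree_eq_some hΦ]
    set c := e.coeff d / (Φ d).leadingCoeff
    have hlow : (e - c • Φ d).degree < d := by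
      rw [degree_lt_iff_coeff_zero]
      intro m hm
      obtain rfl | hm := hm.eq_or_lt
      · have hne : (Φ d).leadingCoeff ≠ 0 := by
          rw [Ne, leadingCoeff_eq_zero]; rintro h0; simp [h0] at hΦ
        rw [coeff_sub, coeff_smul, hlc, smul_eq_mul, div_mul_cancel₀ _ hne, sub_self]
      · have he' : e.coeff m = 0 := coeff_eq_zero_of_degree_lt (he.trans_le (by exact_mod_cast hm))
        have hΦ' : (Φ d).coeff m = 0 := coeff_eq_zero_of_degree_lt (by rw [hΦ]; exact_mod_cast hm)
        rw [coeff_sub, coeff_smul, he', hΦ', smul_zero, sub_zero]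
    have hcΦ : e = c • Φ d := sub_eq_zero.mp <| ih (by omega) hlow fun i hi => by
      rw [sub_mul, smul_mul_assoc, map_sub, map_smul, horth i (by omega),
        h.map_mul_eq d (by omega) i (by omega), if_neg (by omega), smul_zero, sub_zero]
    have hc : c = 0 := by
      simpa [hcΦ, smul_mul_assoc, h.map_mul_eq d (by omega) d (by omega)] using
        horth d d.lt_succ_self
    rw [hcΦ, hc, zero_smul]

theorem eq_sum_of_degree_lt (h : IsOrthonormalUpTo L Φ r) {d : ℕ} (hd : d ≤ r + 1)
    {p : ℝ[X]} (hp : p.degree < d) : p = ∑ i ∈ range d, L (p * Φ i) • Φ i := by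
  refine sub_eq_zero.mp (h.eq_zero_of_orthogonal hd ?_ fun j hj => ?_)
  · refine (degree_sub_le _ _).trans_lt (max_lt hp ((degree_sum_le _ _).trans_lt ?_))
    refine (Finset.sup_lt_iff (WithBot.bot_lt_coe d)).mpr fun i hi => ?_
    refine (degree_smul_le _ _).trans_lt ?_
    rw [h.degree_eq i (by simp at hi; omega)]
    exact WithBot.coe_lt_coe.mpr (mem_range.mp hi)
  · rw [sub_mul, map_sub, h.map_sum_smul_mul hd hj, sub_self]

theorem eq_sum_of_natDegree_le (h : IsOrthonormalUpTo L Φ r) {p : ℝ[X]} (hp : p.natDegree ≤ r) :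
    p = ∑ i ∈ range (r + 1), L (p * Φ i) • Φ i :=
  h.eq_sum_of_degree_lt le_rfl
    (degree_le_natDegree.trans_lt (WithBot.coe_lt_coe.mpr (Nat.lt_succ_of_le hp)))

theorem map_mul_eq_zero_of_degree_lt (h : IsOrthonormalUpTo L Φ r) {j : ℕ} (hj : j ≤ r)
    {p : ℝ[X]} (hp : p.degree < j) : L (p * Φ j) = 0 := by
  rw [h.eq_sum_of_degree_lt (by omega) hp, Finset.sum_mul, map_sum]
  refine Finset.sum_eq_zero fun i hi => ?_
  have hi := mem_range.mp hi
  rw [smul_mul_assoc, map_smul, h.map_mul_eq i (by omega) j hj, if_neg (by omega), smul_zero]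

theorem map_mul_eq_sum (h : IsOrthonormalUpTo L Φ r) (p : ℝ[X]) {q : ℝ[X]}
    (hq : q.natDegree ≤ r) : L (p * q) = ∑ i : Fin (r + 1), L (p * Φ i) * L (q * Φ i) := by
  conv_lhs => rw [h.eq_sum_of_natDegree_le hq]
  simp only [Finset.mul_sum, map_sum, mul_smul_comm, map_smul, smul_eq_mul]
  rw [← Fin.sum_univ_eq_sum_range (fun i => L (q * Φ i) * L (p * Φ i))]
  exact Finset.sum_congr rfl fun i _ => mul_comm _ _

end IsOrthonormalUpTo

noncomputable def reproducingKernel (Φ : ℕ → ℝ[X]) (r : ℕ) (x : ℝ) : ℝ[X] :=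
  ∑ i ∈ range (r + 1), (Φ i).eval x • Φ i

theorem natDegree_reproducingKernel_le {Φ : ℕ → ℝ[X]} {r : ℕ} (hΦ : ∀ i ≤ r, (Φ i).natDegree ≤ i)
    (x : ℝ) : (reproducingKernel Φ r x).natDegree ≤ r :=
  natDegree_sum_le_of_forall_le _ _ fun i hi =>
    (natDegree_smul_le _ _).trans ((hΦ i (by simp at hi; omega)).trans (by simp at hi; omega))

theorem IsOrthonormalUpTo.map_mul_reproducingKernel {L : ℝ[X] →ₗ[ℝ] ℝ} {Φ : ℕ → ℝ[X]} {r : ℕ}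
    (h : IsOrthonormalUpTo L Φ r) {q : ℝ[X]} (hq : q.natDegree ≤ r) (x : ℝ) :
    L (q * reproducingKernel Φ r x) = q.eval x := by
  conv_rhs => rw [h.eq_sum_of_natDegree_le hq]
  simp only [reproducingKernel, Finset.mul_sum, map_sum, mul_smul_comm, map_smul, smul_eq_mul,
    eval_finsetSum, eval_smul]
  exact Finset.sum_congr rfl fun i _ => mul_comm _ _

/-! ### Finitely supported functionals -/

noncomputable def evalSum {ι : Type*} (s : Finset ι) (w θ : ι → ℝ) : ℝ[X] →ₗ[ℝ] ℝ :=
  ∑ i ∈ s, w i • leval (θ i)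

@[simp]
theorem evalSum_apply {ι : Type*} (s : Finset ι) (w θ : ι → ℝ) (p : ℝ[X]) :
    evalSum s w θ p = ∑ i ∈ s, w i * p.eval (θ i) := by
  simp [evalSum]

theorem map_eq_of_map_X_pow_eq {L L' : ℝ[X] →ₗ[ℝ] ℝ} {t : ℕ} (h : ∀ e ≤ t, L (X ^ e) = L' (X ^ e))
    {g : ℝ[X]} (hg : g.natDegree ≤ t) : L g = L' g := by
  rw [g.as_sum_range' (t + 1) (by omega)]
  simp only [map_sum, ← smul_X_eq_monomial, map_smul]
  exact sum_congr rfl fun e he => by rw [h e (by simp at he; omega)]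

theorem map_eq_of_map_mul_eq {L L' : ℝ[X] →ₗ[ℝ] ℝ} {r : ℕ}
    (h : ∀ p q : ℝ[X], p.natDegree ≤ r → q.natDegree ≤ r → L (p * q) = L' (p * q))
    {g : ℝ[X]} (hg : g.natDegree ≤ 2 * r) : L g = L' g := by
  have hX : (X ^ r : ℝ[X]).Monic := monic_X_pow r
  rw [← modByMonic_add_div g (X ^ r), ← mul_one (g %ₘ X ^ r), map_add, map_add, h, h]
  · simp
  · rw [natDegree_divByMonic _ hX, natDegree_X_pow]; omega
  · simpa using natDegree_modByMonic_le g hX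
  · simp

/-! ### Gauss–Radau quadrature -/

theorem map_mul_eq_eval_mul_of_orthogonal {L : ℝ[X] →ₗ[ℝ] ℝ} {U : ℝ[X]} {θ : ℝ} {r : ℕ}
    (hU : ∀ s : ℝ[X], s.degree < r → L (X * s * U) = θ * L (s * U)) {p : ℝ[X]}
    (hp : p.natDegree ≤ r) : L (p * U) = p.eval θ * L U := by
  set s := (p - C (p.eval θ)) /ₘ (X - C θ)
  have hs : (X - C θ) * s = p - C (p.eval θ) := mul_divByMonic_eq_iff_isRoot.mpr (by simp)
  have hsdeg : s.degree < r := by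
    by_cases h0 : p - C (p.eval θ) = 0
    · simp [s, h0]
    · refine (degree_divByMonic_lt _ _ h0 (by simp)).trans_le ?_
      refine (degree_sub_le _ _).trans (max_le (degree_le_of_natDegree_le hp) ?_)
      exact degree_C_le.trans (by exact_mod_cast Nat.zero_le r)
  have key : p * U = p.eval θ • U + X * s * U - θ • (s * U) := by
    simp only [smul_eq_C_mul]
    linear_combination (-U) * hs
  rw [key, map_sub, map_add, map_smul, map_smul, hU s hsdeg, smul_eq_mul, smul_eq_mul]
  ring

/-- The Jacobi matrix `(L (X Φᵢ Φⱼ))ᵢⱼ` of multiplication by `X` on `span {Φ₀, …, Φ_r}`, with its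
last diagonal entry shifted so that `(Φᵢ(x))ᵢ` becomes an eigenvector for the eigenvalue `x`. -/
noncomputable def radauMatrix (L : ℝ[X] →ₗ[ℝ] ℝ) (Φ : ℕ → ℝ[X]) (r : ℕ) (x : ℝ) :
    Matrix (Fin (r + 1)) (Fin (r + 1)) ℝ :=
  Matrix.of fun i j => L (X * Φ i * Φ j) +
    if i = Fin.last r ∧ j = Fin.last r then
      (x * (Φ r).eval x - L (X * Φ r * reproducingKernel Φ r x)) / (Φ r).eval x
    else 0

noncomputable def polyOfCoords (Φ : ℕ → ℝ[X]) {r : ℕ} (u : Fin (r + 1) → ℝ) : ℝ[X] :=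
  ∑ i, u i • Φ i

section Radau

open Matrix

variable {L : ℝ[X] →ₗ[ℝ] ℝ} {Φ : ℕ → ℝ[X]} {r : ℕ}

theorem radauMatrix_isHermitian (x : ℝ) : (radauMatrix L Φ r x).IsHermitian :=
  Matrix.IsHermitian.ext fun i j => by
    simp only [radauMatrix, Matrix.of_apply, star_trivial, and_comm, mul_right_comm]

theorem dotProduct_mulVec_of_mulVec_eq {n : Type*} [Fintype n] {M : Matrix n n ℝ}
    (hM : M.IsHermitian) {u : n → ℝ} {θ : ℝ} (hu : M *ᵥ u = θ • u) (v : n → ℝ) :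
    u ⬝ᵥ (M *ᵥ v) = θ * (u ⬝ᵥ v) := by
  have hT : Mᵀ = M := (Matrix.conjTranspose_eq_transpose_of_trivial M).symm.trans hM
  rw [Matrix.dotProduct_mulVec, ← Matrix.mulVec_transpose, hT, hu, smul_dotProduct, smul_eq_mul]

theorem real_inner_eq_ofLp_dotProduct {n : Type*} [Fintype n] (u v : EuclideanSpace ℝ n) :
    inner ℝ u v = u.ofLp ⬝ᵥ v.ofLp := by
  rw [EuclideanSpace.inner_eq_star_dotProduct, star_trivial, dotProduct_comm]

theorem map_mul_polyOfCoords (p : ℝ[X]) (u : Fin (r + 1) → ℝ) :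
    L (p * polyOfCoords Φ u) = u ⬝ᵥ fun i => L (p * Φ i) := by
  simp [polyOfCoords, Finset.mul_sum, dotProduct]

theorem eval_polyOfCoords (u : Fin (r + 1) → ℝ) (x : ℝ) :
    (polyOfCoords Φ u).eval x = u ⬝ᵥ fun i => (Φ i).eval x := by
  simp [polyOfCoords, eval_finsetSum, dotProduct]

theorem natDegree_polyOfCoords_le (hΦ : ∀ i ≤ r, (Φ i).natDegree ≤ i) (u : Fin (r + 1) → ℝ) :
    (polyOfCoords Φ u).natDegree ≤ r :=
  natDegree_sum_le_of_forall_le _ _ fun i _ =>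
    (natDegree_smul_le _ _).trans ((hΦ i (Nat.lt_succ_iff.mp i.2)).trans (Nat.lt_succ_iff.mp i.2))

theorem sum_sq_eval_polyOfCoords
    (b : OrthonormalBasis (Fin (r + 1)) ℝ (EuclideanSpace ℝ (Fin (r + 1)))) (x : ℝ) :
    ∑ k, (polyOfCoords Φ (b k).ofLp).eval x ^ 2 = ∑ i ∈ range (r + 1), (Φ i).eval x ^ 2 := by
  have := b.sum_inner_mul_inner (WithLp.toLp 2 fun i => (Φ i).eval x)
    (WithLp.toLp 2 fun i => (Φ i).eval x)
  simp only [real_inner_eq_ofLp_dotProduct] at this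
  calc ∑ k, (polyOfCoords Φ (b k).ofLp).eval x ^ 2
      = ∑ k, (fun i : Fin (r + 1) => (Φ i).eval x) ⬝ᵥ (b k).ofLp *
          (b k).ofLp ⬝ᵥ (fun i : Fin (r + 1) => (Φ i).eval x) :=
        Finset.sum_congr rfl fun k _ => by rw [eval_polyOfCoords, sq, dotProduct_comm (b k).ofLp]
    _ = ∑ i ∈ range (r + 1), (Φ i).eval x ^ 2 := by
        rw [this, ← Fin.sum_univ_eq_sum_range (fun i => (Φ i).eval x ^ 2)]
        simp [dotProduct, sq]

namespace IsOrthonormalUpTo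

theorem map_mul_eq_sum_polyOfCoords (h : IsOrthonormalUpTo L Φ r)
    (b : OrthonormalBasis (Fin (r + 1)) ℝ (EuclideanSpace ℝ (Fin (r + 1)))) (p : ℝ[X]) {q : ℝ[X]}
    (hq : q.natDegree ≤ r) :
    L (p * q) = ∑ k, L (p * polyOfCoords Φ (b k).ofLp) * L (q * polyOfCoords Φ (b k).ofLp) := by
  have := b.sum_inner_mul_inner (WithLp.toLp 2 fun i => L (p * Φ i))
    (WithLp.toLp 2 fun i => L (q * Φ i))
  simp only [real_inner_eq_ofLp_dotProduct] at this
  rw [h.map_mul_eq_sum p hq, ← dotProduct, ← this]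
  refine Finset.sum_congr rfl fun k _ => ?_
  rw [map_mul_polyOfCoords, map_mul_polyOfCoords, dotProduct_comm (b k).ofLp,
    dotProduct_comm (b k).ofLp]

theorem radauMatrix_mulVec_coords (h : IsOrthonormalUpTo L Φ r) (x : ℝ) {s : ℝ[X]}
    (hs : s.degree < r) : radauMatrix L Φ r x *ᵥ (fun j : Fin (r + 1) => L (s * Φ j)) =
      fun i : Fin (r + 1) => L (X * s * Φ i) := by
  funext i
  have hlast : L (s * Φ r) = 0 := h.map_mul_eq_zero_of_degree_lt le_rfl hs
  have hmain := h.map_mul_eq_sum (X * Φ i) (natDegree_le_of_degree_le hs.le)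
  simp only [Matrix.mulVec, dotProduct, radauMatrix, Matrix.of_apply, add_mul,
    Finset.sum_add_distrib, ← hmain]
  rw [Finset.sum_eq_zero fun j _ => ?_, add_zero]
  · congr 1; ring
  · split_ifs with hij
    · rw [hij.2, Fin.val_last, hlast, mul_zero]
    · rw [zero_mul]

theorem radauMatrix_mulVec_eval (h : IsOrthonormalUpTo L Φ r) {x : ℝ} (hx : (Φ r).eval x ≠ 0) :
    radauMatrix L Φ r x *ᵥ (fun j : Fin (r + 1) => (Φ j).eval x) =
      x • fun j : Fin (r + 1) => (Φ j).eval x := by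
  funext i
  have hK : ∀ p : ℝ[X], ∑ j : Fin (r + 1), L (p * Φ j) * (Φ j).eval x =
      L (p * reproducingKernel Φ r x) := fun p => by
    simp only [reproducingKernel, Finset.mul_sum, map_sum, mul_smul_comm, map_smul, smul_eq_mul]
    rw [← Fin.sum_univ_eq_sum_range (fun j => (Φ j).eval x * L (p * Φ j))]
    exact Finset.sum_congr rfl fun j _ => mul_comm _ _
  simp only [Matrix.mulVec, dotProduct, radauMatrix, Matrix.of_apply, add_mul,
    Finset.sum_add_distrib, hK, Pi.smul_apply, smul_eq_mul]
  rcases eq_or_ne i (Fin.last r) with rfl | hi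
  · rw [Finset.sum_eq_single (Fin.last r) (fun j _ hj => by simp [hj]) (by simp)]
    simp only [and_self, if_true, Fin.val_last]
    field_simp
    ring
  · rw [Finset.sum_eq_zero fun j _ => by simp [hi], add_zero]
    have hi' : (i : ℕ) < r := Fin.val_lt_last hi
    rw [h.map_mul_reproducingKernel _ x, eval_mul, eval_X]
    refine natDegree_mul_le.trans ?_
    rw [natDegree_X, natDegree_eq_of_degree_eq_some (h.degree_eq i (by omega))]
    omega

theorem map_mul_polyOfCoords_of_mulVec_eq (h : IsOrthonormalUpTo L Φ r) {x θ : ℝ}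
    {u : Fin (r + 1) → ℝ} (hu : radauMatrix L Φ r x *ᵥ u = θ • u) {p : ℝ[X]}
    (hp : p.natDegree ≤ r) : L (p * polyOfCoords Φ u) = p.eval θ * L (polyOfCoords Φ u) :=
  map_mul_eq_eval_mul_of_orthogonal (fun s hs => by
    rw [map_mul_polyOfCoords, map_mul_polyOfCoords, ← h.radauMatrix_mulVec_coords x hs,
      dotProduct_mulVec_of_mulVec_eq (radauMatrix_isHermitian x) hu]) hp

theorem eval_polyOfCoords_of_mulVec_eq (h : IsOrthonormalUpTo L Φ r) {x θ : ℝ}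
    (hx : (Φ r).eval x ≠ 0) {u : Fin (r + 1) → ℝ} (hu : radauMatrix L Φ r x *ᵥ u = θ • u) :
    (polyOfCoords Φ u).eval x = if θ = x then
      (∑ i ∈ range (r + 1), (Φ i).eval x ^ 2) * L (polyOfCoords Φ u) else 0 := by
  split_ifs with hθ
  · rw [← h.map_mul_reproducingKernel (natDegree_polyOfCoords_le h.natDegree_le _), mul_comm,
      h.map_mul_polyOfCoords_of_mulVec_eq hu (natDegree_reproducingKernel_le h.natDegree_le x), hθ]
    simp [reproducingKernel, eval_finsetSum, sq]
  · have := dotProduct_mulVec_of_mulVec_eq (radauMatrix_isHermitian x) hu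
      (fun j => (Φ j).eval x)
    rw [h.radauMatrix_mulVec_eval hx, dotProduct_smul, smul_eq_mul] at this
    rw [eval_polyOfCoords]
    exact (mul_eq_zero.mp (by linear_combination this)).resolve_left (sub_ne_zero.mpr (Ne.symm hθ))

theorem exists_radau_quadrature (h : IsOrthonormalUpTo L Φ r) {x : ℝ} (hx : (Φ r).eval x ≠ 0) :
    ∃ θ w : Fin (r + 1) → ℝ, x ∈ Set.range θ ∧
      (∀ g : ℝ[X], g.natDegree ≤ 2 * r → L g = evalSum univ w θ g) ∧
      (∑ k ∈ univ.filter (θ · = x), w k) * ∑ i ∈ range (r + 1), (Φ i).eval x ^ 2 = 1 := by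
  have hM := radauMatrix_isHermitian (L := L) (Φ := Φ) (r := r) x
  set b := hM.eigenvectorBasis
  set θ := hM.eigenvalues
  set U : Fin (r + 1) → ℝ[X] := fun k => polyOfCoords Φ (b k).ofLp
  set K := ∑ i ∈ range (r + 1), (Φ i).eval x ^ 2
  have hU : ∀ k {p : ℝ[X]}, p.natDegree ≤ r → L (p * U k) = p.eval (θ k) * L (U k) :=
    fun k => h.map_mul_polyOfCoords_of_mulVec_eq (hM.mulVec_eigenvectorBasis k)
  have hKpos : 0 < K := lt_of_lt_of_le (by positivity) <|
    single_le_sum (f := fun i => (Φ i).eval x ^ 2) (fun i _ => sq_nonneg _) (self_mem_range_succ r)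
  have hK : K ^ 2 * ∑ k ∈ univ.filter (θ · = x), L (U k) ^ 2 = K := calc
    _ = ∑ k, (U k).eval x ^ 2 := by
      rw [Finset.mul_sum, Finset.sum_filter]
      refine Finset.sum_congr rfl fun k _ => ?_
      rw [h.eval_polyOfCoords_of_mulVec_eq hx (hM.mulVec_eigenvectorBasis k)]
      split_ifs <;> ring
    _ = K := sum_sq_eval_polyOfCoords b x
  refine ⟨θ, fun k => L (U k) ^ 2, ?_, fun g hg => map_eq_of_map_mul_eq (fun p q hp hq => ?_) hg,
    ?_⟩
  · by_contra hxθ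
    have : univ.filter (θ · = x) = ∅ := filter_eq_empty_iff.mpr fun k _ hk => hxθ ⟨k, hk⟩
    rw [this, sum_empty, mul_zero] at hK
    exact hKpos.ne hK
  · rw [h.map_mul_eq_sum_polyOfCoords b p hq, evalSum_apply]
    refine Finset.sum_congr rfl fun k _ => ?_
    rw [hU k hp, hU k hq, eval_mul]
    ring
  · rw [mul_comm]
    exact mul_left_cancel₀ hKpos.ne' (by rw [mul_one]; linear_combination hK)

/-- When `Φ κ` vanishes at `x`, the quadrature is built on `Φ₀, …, Φ_r` for the last `r ≤ κ` with
`Φ r x ≠ 0`; this does not change `∑_{i ≤ κ} Φᵢ(x)²`. -/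
theorem exists_quadrature_with_node {κ : ℕ} (h : IsOrthonormalUpTo L Φ κ) (x : ℝ) :
    ∃ r ≤ κ, ∃ θ w : Fin (r + 1) → ℝ, x ∈ Set.range θ ∧
      (∀ g : ℝ[X], g.natDegree ≤ 2 * r → L g = evalSum univ w θ g) ∧
      (∑ k ∈ univ.filter (θ · = x), w k) * ∑ i ∈ range (κ + 1), (Φ i).eval x ^ 2 = 1 := by
  have hΦ0 : (Φ 0).eval x ≠ 0 := by
    have hd := h.degree_eq 0 (Nat.zero_le κ)
    rw [eq_C_of_degree_eq_zero hd, eval_C]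
    exact coeff_ne_zero_of_eq_degree hd
  set r := Nat.findGreatest (fun j => (Φ j).eval x ≠ 0) κ
  have hr : r ≤ κ := Nat.findGreatest_le κ
  obtain ⟨θ, w, hxθ, hquad, hw⟩ := (h.mono hr).exists_radau_quadrature
    (Nat.findGreatest_spec (P := fun j => (Φ j).eval x ≠ 0) (Nat.zero_le κ) hΦ0)
  have htail : ∑ j ∈ Ico (r + 1) (κ + 1), (Φ j).eval x ^ 2 = 0 := sum_eq_zero fun j hj => by
    obtain ⟨h1, h2⟩ := mem_Ico.mp hj
    have : ¬(Φ j).eval x ≠ 0 :=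
      Nat.findGreatest_is_greatest (P := fun j => (Φ j).eval x ≠ 0) (n := κ) (by omega) (by omega)
    rw [not_not.mp this, zero_pow two_ne_zero]
  refine ⟨r, hr, θ, w, hxθ, hquad, ?_⟩
  rwa [← sum_range_add_sum_Ico _ (by omega : r + 1 ≤ κ + 1), htail, add_zero]

end IsOrthonormalUpTo

end Radau

/-! ### Markov–Stieltjes polynomials -/

theorem Polynomial.eval_le_eval_of_derivative_nonneg (p : ℝ[X]) {a b : ℝ} (hab : a ≤ b)
    (h : ∀ ξ ∈ Set.Ioo a b, 0 ≤ (derivative p).eval ξ) : p.eval a ≤ p.eval b :=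
  monotoneOn_of_deriv_nonneg (convex_Icc a b) p.continuous.continuousOn
    p.differentiable.differentiableOn
    (fun ξ hξ => by rw [interior_Icc] at hξ; rw [Polynomial.deriv]; exact h ξ hξ)
    (Set.left_mem_Icc.mpr hab) (Set.right_mem_Icc.mpr hab) hab

theorem Polynomial.eval_le_eval_of_derivative_nonpos (p : ℝ[X]) {a b : ℝ} (hab : a ≤ b)
    (h : ∀ ξ ∈ Set.Ioo a b, (derivative p).eval ξ ≤ 0) : p.eval b ≤ p.eval a :=
  antitoneOn_of_deriv_nonpos (convex_Icc a b) p.continuous.continuousOn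
    p.differentiable.differentiableOn
    (fun ξ hξ => by rw [interior_Icc] at hξ; rw [Polynomial.deriv]; exact h ξ hξ)
    (Set.left_mem_Icc.mpr hab) (Set.right_mem_Icc.mpr hab) hab

theorem Polynomial.exists_isRoot_derivative_before_next (p : ℝ[X]) {S : Finset ℝ} {c z w : ℝ}
    (hS : ∀ s ∈ S, p.eval s = c) (hz : z ∈ S) (hw : w ∈ S) (hzw : z < w) :
    ∃ ρ, z < ρ ∧ (derivative p).IsRoot ρ ∧ ∀ s ∈ S, z < s → ρ < s := by
  have hne : (S.filter (z < ·)).Nonempty := ⟨w, mem_filter.mpr ⟨hw, hzw⟩⟩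
  obtain ⟨hnext, hznext⟩ := mem_filter.mp ((S.filter (z < ·)).min'_mem hne)
  obtain ⟨ρ, ⟨hzρ, hρnext⟩, hρ⟩ := exists_deriv_eq_zero hznext p.continuous.continuousOn
    ((hS z hz).trans (hS _ hnext).symm)
  refine ⟨ρ, hzρ, by rwa [Polynomial.deriv] at hρ, fun s hs hzs => ?_⟩
  exact hρnext.trans_le ((S.filter (z < ·)).min'_le s (mem_filter.mpr ⟨hs, hzs⟩))

theorem Polynomial.isRoot_and_isRoot_derivative_of_sq_dvd {p : ℝ[X]} {a : ℝ}
    (h : (X - C a) ^ 2 ∣ p) : p.IsRoot a ∧ (derivative p).IsRoot a :=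
  ⟨dvd_iff_isRoot.mp ((dvd_pow_self _ two_ne_zero).trans h),
    dvd_iff_isRoot.mp (by simpa using pow_sub_one_dvd_derivative_of_pow_dvd h)⟩

theorem exists_dvd_and_dvd_sub_one {A : Type*} [CommRing A] {W₁ W₂ : A[X]} (hW₁ : W₁.Monic)
    (hW₁1 : W₁ ≠ 1) (h : IsCoprime W₁ W₂) :
    ∃ R : A[X], W₂ ∣ R ∧ W₁ ∣ R - 1 ∧ R.natDegree < W₁.natDegree + W₂.natDegree := by
  obtain ⟨P, Q, hPQ⟩ := h
  refine ⟨W₂ * (Q %ₘ W₁), dvd_mul_right _ _, ⟨-P - W₂ * (Q /ₘ W₁), ?_⟩, ?_⟩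
  · linear_combination W₂ * modByMonic_add_div Q W₁ + hPQ
  · exact natDegree_mul_le.trans_lt (by linarith [natDegree_modByMonic_lt Q hW₁ hW₁1])

theorem prod_pairs_nonneg {A : Finset ℝ} {ρ : ℝ → ℝ} (hρ : ∀ z ∈ A, z < ρ z) {ξ : ℝ}
    (hξ : ∀ z ∈ A, ξ ∉ Set.Ioo z (ρ z)) : 0 ≤ ∏ z ∈ A, (ξ - z) * (ξ - ρ z) := by
  refine prod_nonneg fun z hz => ?_
  rcases le_or_gt ξ z with h | h
  · exact mul_nonneg_of_nonpos_of_nonpos (by linarith) (by linarith [hρ z hz])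
  · have : ρ z ≤ ξ := not_lt.mp fun h' => hξ z hz ⟨h, h'⟩
    exact mul_nonneg (by linarith) (by linarith)

theorem prod_pairs_nonpos {A : Finset ℝ} {ρ : ℝ → ℝ} (hρ : ∀ z ∈ A, z < ρ z)
    (hsep : ∀ z ∈ A, ∀ z' ∈ A, z < z' → ρ z < z') {z₀ ξ : ℝ} (hz₀ : z₀ ∈ A)
    (hξ : ξ ∈ Set.Ioo z₀ (ρ z₀)) : ∏ z ∈ A, (ξ - z) * (ξ - ρ z) ≤ 0 := by
  rw [← mul_prod_erase A _ hz₀]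
  refine mul_nonpos_of_nonpos_of_nonneg
    (mul_nonpos_of_nonneg_of_nonpos (by linarith [hξ.1]) (by linarith [hξ.2]))
    (prod_pairs_nonneg (fun z hz => hρ z (mem_of_mem_erase hz)) fun z hz hξz => ?_)
  obtain ⟨hzz₀, hz⟩ := mem_erase.mp hz
  rcases lt_or_gt_of_ne hzz₀ with h | h
  · linarith [hsep z hz z₀ hz₀ h, hξz.2, hξ.1]
  · linarith [hsep z₀ hz₀ z hz h, hξz.1, hξ.2]

theorem Polynomial.eval_eq_leadingCoeff_mul_prod_pairs {q : ℝ[X]} (hq : q ≠ 0) {m : ℝ}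
    {A : Finset ℝ} {ρ : ℝ → ℝ} (hρ : ∀ z ∈ A, z < ρ z)
    (hsep : ∀ z ∈ A, ∀ z' ∈ A, z < z' → ρ z < z') (hm : ∀ z ∈ A, ρ z < m)
    (hroot : q.IsRoot m) (hroots : ∀ z ∈ A, q.IsRoot z ∧ q.IsRoot (ρ z))
    (hdeg : q.natDegree ≤ 2 * A.card + 1) (ξ : ℝ) :
    q.eval ξ = q.leadingCoeff * ((ξ - m) * ∏ z ∈ A, (ξ - z) * (ξ - ρ z)) := by
  set M : Multiset ℝ := m ::ₘ A.val.bind fun z => {z, ρ z}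
  have hpair : ∀ z ∈ A, ∀ z' ∈ A, z < z' → Disjoint ({z, ρ z} : Multiset ℝ) {z', ρ z'} := by
    intro z hz z' hz' h
    have := hsep z hz z' hz' h
    have := hρ z hz
    have := hρ z' hz'
    simp only [Multiset.disjoint_left, Multiset.insert_eq_cons, Multiset.mem_cons,
      Multiset.mem_singleton]
    rintro a ha hb
    rcases ha with rfl | rfl <;> rcases hb with hb | hb <;> linarith
  have hnodup : M.Nodup := by
    refine Multiset.nodup_cons.mpr ⟨fun hmem => ?_, Multiset.nodup_bind.mpr ⟨fun z hz => ?_, ?_⟩⟩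
    · obtain ⟨z, hz, hmz⟩ := Multiset.mem_bind.mp hmem
      simp only [Multiset.insert_eq_cons, Multiset.mem_cons, Multiset.mem_singleton] at hmz
      rcases hmz with rfl | rfl <;> linarith [hρ _ hz, hm _ hz]
    · simpa using (hρ z hz).ne
    · refine Multiset.Nodup.pairwise (fun z hz z' hz' hne => ?_) A.nodup
      rcases lt_or_gt_of_ne hne with h | h
      · exact hpair z hz z' hz' h
      · exact (hpair z' hz' z hz h).symm
  have hcard : Multiset.card M = 2 * A.card + 1 := by
    simp [M]
    omega
  have hroots' : M = q.roots := by
    refine Multiset.eq_of_le_of_card_le ((Multiset.le_iff_subset hnodup).mpr fun a ha => ?_)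
      ((card_roots' q).trans (hdeg.trans hcard.ge))
    rw [mem_roots hq]
    rcases Multiset.mem_cons.mp ha with rfl | ha
    · exact hroot
    · obtain ⟨z, hz, haz⟩ := Multiset.mem_bind.mp ha
      simp only [Multiset.insert_eq_cons, Multiset.mem_cons, Multiset.mem_singleton] at haz
      rcases haz with rfl | rfl
      exacts [(hroots _ hz).1, (hroots _ hz).2]
  have hq' := C_leadingCoeff_mul_prod_multiset_X_sub_C
    (le_antisymm (card_roots' q) (hroots' ▸ hcard ▸ hdeg))
  rw [← hroots'] at hq'
  conv_lhs => rw [← hq']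
  simp only [M, eval_mul, eval_C, eval_multiset_prod, Multiset.map_map, Multiset.map_cons,
    Multiset.prod_cons, Multiset.map_bind, Multiset.prod_bind, Function.comp_apply, eval_sub,
    eval_X, Multiset.insert_eq_cons, Multiset.prod_singleton, Multiset.map_singleton]
  rfl

structure IsStepInterpolant (Z : Finset ℝ) (x : ℝ) (R : ℝ[X]) : Prop where
  natDegree_le : R.natDegree ≤ 2 * (Z.card - 1)
  eval_eq : ∀ z ∈ Z, R.eval z = (Set.Iic x).indicator 1 z
  isRoot_derivative : ∀ z ∈ Z, z ≠ x → (derivative R).IsRoot z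

theorem exists_isStepInterpolant {Z : Finset ℝ} {x : ℝ} (hx : x ∈ Z) :
    ∃ R, IsStepInterpolant Z x R := by
  set LA := Z.filter (· < x)
  set B := Z.filter (x < ·)
  set W₁ : ℝ[X] := (X - C x) * ∏ a ∈ LA, (X - C a) ^ 2
  set W₂ : ℝ[X] := ∏ b ∈ B, (X - C b) ^ 2
  have hcop : ∀ a b : ℝ, a ≠ b → IsCoprime (X - C a) (X - C b) := fun a b hab =>
    isCoprime_X_sub_C_of_isUnit_sub (sub_ne_zero.mpr hab).isUnit
  have hW : IsCoprime W₁ W₂ := by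
    refine IsCoprime.mul_left (IsCoprime.prod_right fun b hb => (hcop _ _ ?_).pow_right)
      (IsCoprime.prod_left fun a ha => IsCoprime.prod_right fun b hb => (hcop _ _ ?_).pow)
    · exact (mem_filter.mp hb).2.ne
    · exact ((mem_filter.mp ha).2.trans (mem_filter.mp hb).2).ne
  have hsq : ∀ s : Finset ℝ, (∏ a ∈ s, (X - C a) ^ 2).Monic := fun s =>
    monic_prod_of_monic _ _ fun a _ => (monic_X_sub_C a).pow 2
  have hW₁ : W₁.Monic := (monic_X_sub_C x).mul (hsq LA)
  have hdeg₁ : W₁.natDegree = 1 + 2 * LA.card := by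
    rw [(monic_X_sub_C x).natDegree_mul (hsq LA), natDegree_X_sub_C,
      natDegree_prod_of_monic _ _ fun a _ => (monic_X_sub_C a).pow 2]
    simp [mul_comm]
  have hdeg₂ : W₂.natDegree = 2 * B.card := by
    rw [natDegree_prod_of_monic _ _ fun a _ => (monic_X_sub_C a).pow 2]
    simp [mul_comm]
  have hcard : LA.card + B.card ≤ Z.card - 1 := by
    rw [← card_union_of_disjoint (disjoint_filter.mpr fun z _ h1 h2 => lt_asymm h1 h2),
      ← card_erase_of_mem hx]
    exact card_le_card fun z hz => by
      rcases mem_union.mp hz with hz | hz <;> obtain ⟨hz, h⟩ := mem_filter.mp hz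
      exacts [mem_erase.mpr ⟨h.ne, hz⟩, mem_erase.mpr ⟨h.ne', hz⟩]
  obtain ⟨R, hR₂, hR₁, hRdeg⟩ := exists_dvd_and_dvd_sub_one hW₁
    (fun h => by rw [h, natDegree_one] at hdeg₁; omega) hW
  have hone : ∀ z, (R - 1).IsRoot z → R.eval z = 1 := fun z hz => by
    simpa [sub_eq_zero] using hz.eq_zero
  have hlow : ∀ a ∈ LA, (R - 1).IsRoot a ∧ (derivative (R - 1)).IsRoot a := fun a ha =>
    isRoot_and_isRoot_derivative_of_sq_dvd <|
      ((dvd_prod_of_mem (fun a => (X - C a) ^ 2) ha).trans (dvd_mul_left _ (X - C x))).trans hR₁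
  have hhigh : ∀ b ∈ B, R.IsRoot b ∧ (derivative R).IsRoot b := fun b hb =>
    isRoot_and_isRoot_derivative_of_sq_dvd <|
      (dvd_prod_of_mem (fun b => (X - C b) ^ 2) hb).trans hR₂
  refine ⟨R, ⟨by omega, fun z hz => ?_, fun z hz hzx => ?_⟩⟩
  · rcases lt_trichotomy z x with h | rfl | h
    · simp [hone z (hlow z (mem_filter.mpr ⟨hz, h⟩)).1, h.le]
    · simp [hone z (dvd_iff_isRoot.mp ((dvd_mul_right _ _).trans hR₁))]
    · simp [(hhigh z (mem_filter.mpr ⟨hz, h⟩)).1.eq_zero, not_le.mpr h]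
  · rcases lt_or_gt_of_ne hzx with h | h
    · simpa using (hlow z (mem_filter.mpr ⟨hz, h⟩)).2
    · exact (hhigh z (mem_filter.mpr ⟨hz, h⟩)).2

namespace IsStepInterpolant

variable {Z : Finset ℝ} {x m : ℝ} {R : ℝ[X]}

theorem exists_rolle (hR : IsStepInterpolant Z x R) (hx : x ∈ Z) (hm : m ∈ Z)
    (hmax : ∀ z ∈ Z, z ≤ m) :
    ∃ ρ : ℝ → ℝ, ∀ z ∈ (Z.erase x).erase m,
      z < ρ z ∧ (derivative R).IsRoot (ρ z) ∧ ∀ w ∈ Z, z < w → ρ z < w := by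
  have key : ∀ z ∈ (Z.erase x).erase m,
      ∃ ρ, z < ρ ∧ (derivative R).IsRoot ρ ∧ ∀ w ∈ Z, z < w → ρ < w := by
    intro z hz
    obtain ⟨hzm, hzx, hz⟩ : z ≠ m ∧ z ≠ x ∧ z ∈ Z := by simpa using hz
    rcases lt_or_gt_of_ne hzx with h | h
    · obtain ⟨ρ, hzρ, hρ, hρS⟩ := R.exists_isRoot_derivative_before_next (S := Z.filter (· ≤ x))
        (c := 1) (fun s hs => by simp [hR.eval_eq s (mem_filter.mp hs).1, (mem_filter.mp hs).2])
        (mem_filter.mpr ⟨hz, h.le⟩) (mem_filter.mpr ⟨hx, le_rfl⟩) h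
      refine ⟨ρ, hzρ, hρ, fun w hw hzw => ?_⟩
      rcases le_or_gt w x with hwx | hwx
      · exact hρS w (mem_filter.mpr ⟨hw, hwx⟩) hzw
      · exact (hρS x (mem_filter.mpr ⟨hx, le_rfl⟩) h).trans hwx
    · obtain ⟨ρ, hzρ, hρ, hρS⟩ := R.exists_isRoot_derivative_before_next (S := Z.filter (x < ·))
        (c := 0) (fun s hs => by simp [hR.eval_eq s (mem_filter.mp hs).1, (mem_filter.mp hs).2])
        (mem_filter.mpr ⟨hz, h⟩) (mem_filter.mpr ⟨hm, h.trans_le (hmax z hz)⟩)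
        ((hmax z hz).lt_of_ne hzm)
      exact ⟨ρ, hzρ, hρ, fun w hw hzw => hρS w (mem_filter.mpr ⟨hw, h.trans hzw⟩) hzw⟩
  choose! ρ hρ using key
  exact ⟨ρ, hρ⟩

/-- The nodes other than `x` and the Rolle points `ρ z` are `2 |Z| - 3 ≥ deg R'` distinct roots of
`R'`, hence all of them. The sign of `c` is read off between `x` and the next node, where `R` drops
from `1` to `0`. -/
theorem exists_eval_derivative_eq (hR : IsStepInterpolant Z x R) (hx : x ∈ Z) (hm : m ∈ Z)
    (hxm : x < m) (hmax : ∀ z ∈ Z, z ≤ m) {ρ : ℝ → ℝ}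
    (hρ : ∀ z ∈ (Z.erase x).erase m,
      z < ρ z ∧ (derivative R).IsRoot (ρ z) ∧ ∀ w ∈ Z, z < w → ρ z < w) :
    ∃ c > 0, ∀ ξ, (derivative R).eval ξ =
      c * ((ξ - m) * ∏ z ∈ (Z.erase x).erase m, (ξ - z) * (ξ - ρ z)) := by
  set A := (Z.erase x).erase m
  have hA : ∀ {z}, z ∈ A → z ≠ m ∧ z ≠ x ∧ z ∈ Z := by simp [A]
  have hTx : R.eval x = 1 := by simp [hR.eval_eq x hx]
  have hTm : R.eval m = 0 := by simp [hR.eval_eq m hm, not_le.mpr hxm]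
  have hR' : derivative R ≠ 0 := fun h0 => by
    rw [eq_C_of_natDegree_eq_zero (derivative_eq_zero.mp h0)] at hTx hTm
    simp only [eval_C] at hTx hTm
    linarith
  have hcardA : A.card + 2 = Z.card := by
    rw [card_erase_of_mem (mem_erase.mpr ⟨hxm.ne', hm⟩), card_erase_of_mem hx]
    have := Finset.one_lt_card.mpr ⟨x, hx, m, hm, hxm.ne⟩
    omega
  have hfac := eval_eq_leadingCoeff_mul_prod_pairs hR' (fun z hz => (hρ z hz).1)
    (fun z hz z' hz' h => (hρ z hz).2.2 z' (hA hz').2.2 h)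
    (fun z hz => (hρ z hz).2.2 m hm ((hmax z (hA hz).2.2).lt_of_ne (hA hz).1))
    (hR.isRoot_derivative m hm hxm.ne') (fun z hz => ⟨hR.isRoot_derivative z (hA hz).2.2
      (hA hz).2.1, (hρ z hz).2.1⟩)
    ((natDegree_derivative_le R).trans (by have := hR.natDegree_le; omega))
  refine ⟨_, ?_, hfac⟩
  have hne : (Z.filter (x < ·)).Nonempty := ⟨m, mem_filter.mpr ⟨hm, hxm⟩⟩
  obtain ⟨hnext, hxnext⟩ := mem_filter.mp ((Z.filter (x < ·)).min'_mem hne)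
  obtain ⟨ξ, ⟨hxξ, hξnext⟩, hξ⟩ := exists_deriv_eq_slope (fun y => R.eval y) hxnext
    R.continuous.continuousOn R.differentiable.differentiableOn
  rw [Polynomial.deriv, hfac, hTx, hR.eval_eq _ hnext,
    Set.indicator_of_notMem (show _ ∉ Set.Iic x from not_le.mpr hxnext)] at hξ
  have hP : 0 ≤ ∏ z ∈ A, (ξ - z) * (ξ - ρ z) := prod_pairs_nonneg (fun z hz => (hρ z hz).1)
    fun z hz hξz => by
      rcases lt_or_gt_of_ne (hA hz).2.1 with h | h
      · linarith [(hρ z hz).2.2 x hx h, hξz.2]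
      · linarith [hξz.1, (Z.filter (x < ·)).min'_le z (mem_filter.mpr ⟨(hA hz).2.2, h⟩)]
  have hξm : ξ - m < 0 := by linarith [(Z.filter (x < ·)).min'_le m (mem_filter.mpr ⟨hm, hxm⟩)]
  have hslope : (0 - 1) / ((Z.filter (x < ·)).min' hne - x) < 0 :=
    div_neg_of_neg_of_pos (by norm_num) (sub_pos.mpr hxnext)
  by_contra hc
  nlinarith [mul_nonpos_of_nonpos_of_nonneg hξm.le hP]

theorem exists_derivative_sign (hR : IsStepInterpolant Z x R) (hx : x ∈ Z) (hm : m ∈ Z)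
    (hxm : x < m) (hmax : ∀ z ∈ Z, z ≤ m) :
    ∃ ρ : ℝ → ℝ, (∀ z ∈ (Z.erase x).erase m, z < ρ z ∧ ∀ w ∈ Z, z < w → ρ z < w) ∧
      (∀ z ∈ (Z.erase x).erase m, ∀ ξ ∈ Set.Ioo z (ρ z), 0 ≤ (derivative R).eval ξ) ∧
      (∀ ξ, m < ξ → 0 ≤ (derivative R).eval ξ) ∧
      (∀ ξ < m, (∀ z ∈ (Z.erase x).erase m, ξ ∉ Set.Ioo z (ρ z)) →
        (derivative R).eval ξ ≤ 0) := by
  obtain ⟨ρ, hρ⟩ := hR.exists_rolle hx hm hmax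
  obtain ⟨c, hc, hR'⟩ := hR.exists_eval_derivative_eq hx hm hxm hmax hρ
  have hA : ∀ {z}, z ∈ (Z.erase x).erase m → z ≠ m ∧ z ≠ x ∧ z ∈ Z := by simp
  have hρm : ∀ z ∈ (Z.erase x).erase m, ρ z < m := fun z hz =>
    (hρ z hz).2.2 m hm ((hmax z (hA hz).2.2).lt_of_ne (hA hz).1)
  refine ⟨ρ, fun z hz => ⟨(hρ z hz).1, (hρ z hz).2.2⟩, fun z hz ξ hξ => ?_, fun ξ hξ => ?_,
    fun ξ hξ hξA => ?_⟩ <;> rw [hR']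
  · exact mul_nonneg hc.le (mul_nonneg_of_nonpos_of_nonpos (by linarith [hξ.2, hρm z hz])
      (prod_pairs_nonpos (fun z hz => (hρ z hz).1)
        (fun z hz z' hz' h => (hρ z hz).2.2 z' (hA hz').2.2 h) hz hξ))
  · exact mul_nonneg hc.le (mul_nonneg (by linarith) (prod_pairs_nonneg (fun z hz => (hρ z hz).1)
      fun z hz hξz => by linarith [hξz.2, hρm z hz]))
  · exact mul_nonpos_of_nonneg_of_nonpos hc.le (mul_nonpos_of_nonpos_of_nonneg (by linarith)
      (prod_pairs_nonneg (fun z hz => (hρ z hz).1) hξA))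

theorem indicator_le_eval (hR : IsStepInterpolant Z x R) (hx : x ∈ Z) (hm : m ∈ Z) (hxm : x < m)
    (hmax : ∀ z ∈ Z, z ≤ m) (y : ℝ) : (Set.Iic x).indicator 1 y ≤ R.eval y := by
  obtain ⟨ρ, hρ, hinc, hbeyond, hdec⟩ := hR.exists_derivative_sign hx hm hxm hmax
  have hA : ∀ {z}, z ∈ (Z.erase x).erase m → z ≠ m ∧ z ≠ x ∧ z ∈ Z := by simp
  rcases le_or_gt m y with hym | hym
  · rw [Set.indicator_of_notMem (show y ∉ Set.Iic x from not_le.mpr (hxm.trans_le hym))]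
    calc (0 : ℝ) = R.eval m := by simp [hR.eval_eq m hm, not_le.mpr hxm]
      _ ≤ R.eval y := R.eval_le_eval_of_derivative_nonneg hym fun ξ hξ => hbeyond ξ hξ.1
  by_cases hyA : ∃ z ∈ (Z.erase x).erase m, y ∈ Set.Icc z (ρ z)
  · obtain ⟨z, hz, hzy, hyρ⟩ := hyA
    have hTzy : (Set.Iic x).indicator 1 y = (Set.Iic x).indicator (1 : ℝ → ℝ) z := by
      rcases lt_or_gt_of_ne (hA hz).2.1 with h | h
      · simp [h.le, hyρ.trans ((hρ z hz).2 x hx h).le]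
      · simp [not_le.mpr h, not_le.mpr (h.trans_le hzy)]
    rw [hTzy, ← hR.eval_eq z (hA hz).2.2]
    exact R.eval_le_eval_of_derivative_nonneg hzy fun ξ hξ =>
      hinc z hz ξ ⟨hξ.1, hξ.2.trans_le hyρ⟩
  have hne : (Z.filter (y ≤ ·)).Nonempty := ⟨m, mem_filter.mpr ⟨hm, hym.le⟩⟩
  obtain ⟨hw, hyw⟩ := mem_filter.mp ((Z.filter (y ≤ ·)).min'_mem hne)
  have hwmin : ∀ z ∈ Z, y ≤ z → (Z.filter (y ≤ ·)).min' hne ≤ z := fun z hz h =>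
    (Z.filter (y ≤ ·)).min'_le z (mem_filter.mpr ⟨hz, h⟩)
  have hTyw : (Set.Iic x).indicator 1 y ≤ R.eval ((Z.filter (y ≤ ·)).min' hne) := by
    rw [hR.eval_eq _ hw]
    by_cases hyx : y ≤ x
    · simp [hyx, hwmin x hx hyx]
    · rw [Set.indicator_of_notMem (show y ∉ Set.Iic x from hyx)]
      exact Set.indicator_nonneg (fun _ _ => zero_le_one) _
  refine hTyw.trans (R.eval_le_eval_of_derivative_nonpos hyw fun ξ hξ =>
    hdec ξ (hξ.2.trans_le (hmax _ hw)) fun z hz hξz => ?_)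
  rcases le_or_gt y z with hyz | hzy
  · linarith [hwmin z (hA hz).2.2 hyz, hξz.1, hξ.2]
  · exact hyA ⟨z, hz, hzy.le, hξ.1.le.trans hξz.2.le⟩

end IsStepInterpolant

theorem exists_majorant {Z : Finset ℝ} {x : ℝ} (hx : x ∈ Z) :
    ∃ R : ℝ[X], R.natDegree ≤ 2 * (Z.card - 1) ∧ (∀ y, (Set.Iic x).indicator 1 y ≤ R.eval y) ∧
      ∀ z ∈ Z, R.eval z = (Set.Iic x).indicator 1 z := by
  by_cases h : ∃ z ∈ Z, x < z
  · obtain ⟨z, hz, hxz⟩ := h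
    obtain ⟨R, hR⟩ := exists_isStepInterpolant hx
    exact ⟨R, hR.natDegree_le, hR.indicator_le_eval hx (Z.max'_mem ⟨x, hx⟩)
      (hxz.trans_le (Z.le_max' z hz)) fun w hw => Z.le_max' w hw, hR.eval_eq⟩
  · refine ⟨1, by simp, fun y => ?_, fun z hz => ?_⟩
    · rw [eval_one]
      exact Set.indicator_le_self' (fun _ _ => zero_le_one) y
    · simp [not_lt.mp fun hxz => h ⟨z, hz, hxz⟩]

theorem exists_minorant {Z : Finset ℝ} {x : ℝ} (hx : x ∈ Z) :
    ∃ r : ℝ[X], r.natDegree ≤ 2 * (Z.card - 1) ∧ (∀ y, r.eval y ≤ (Set.Iio x).indicator 1 y) ∧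
      ∀ z ∈ Z, r.eval z = (Set.Iio x).indicator 1 z := by
  obtain ⟨R, hdeg, hle, heq⟩ := exists_majorant (mem_image_of_mem Neg.neg hx)
  have hev : ∀ y, (1 - R.comp (-X)).eval y = 1 - R.eval (-y) := by simp
  have hind : ∀ y, (Set.Iio x).indicator (1 : ℝ → ℝ) y = 1 - (Set.Iic (-x)).indicator 1 (-y) := by
    intro y
    by_cases hy : y < x <;> simp [hy, not_lt.mp]
  refine ⟨1 - R.comp (-X), ?_, fun y => ?_, fun z hz => ?_⟩
  · have hcomp : (R.comp (-X)).natDegree = R.natDegree := by simp [natDegree_comp]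
    rw [card_image_of_injective _ neg_injective] at hdeg
    refine (natDegree_sub_le _ _).trans ?_
    rw [natDegree_one, hcomp]
    omega
  · rw [hev, hind]
    linarith [hle (-y)]
  · rw [hev, hind, heq _ (mem_image_of_mem _ hz)]

theorem sum_mul_indicator_Iic {ι : Type*} (s : Finset ι) (a pt : ι → ℝ) (x : ℝ) :
    ∑ i ∈ s, a i * (Set.Iic x).indicator 1 (pt i) = ∑ i ∈ s.filter (pt · ≤ x), a i := by
  rw [sum_filter]
  exact sum_congr rfl fun i _ => by by_cases h : pt i ≤ x <;> simp [h]

theorem sum_mul_indicator_Iio {ι : Type*} (s : Finset ι) (a pt : ι → ℝ) (x : ℝ) :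
    ∑ i ∈ s, a i * (Set.Iio x).indicator 1 (pt i) = ∑ i ∈ s.filter (pt · < x), a i := by
  rw [sum_filter]
  exact sum_congr rfl fun i _ => by by_cases h : pt i < x <;> simp [h]

theorem sum_filter_lt_le_and_le_sum_filter_le {ι : Type*} {s : Finset ι} {ν pt : ι → ℝ}
    (hν : ∀ i ∈ s, 0 ≤ ν i) {r : ℕ} {θ w : Fin (r + 1) → ℝ}
    (hquad : ∀ g : ℝ[X], g.natDegree ≤ 2 * r → evalSum s ν pt g = evalSum univ w θ g) {x : ℝ}
    (hx : x ∈ Set.range θ) :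
    ∑ k ∈ univ.filter (θ · < x), w k ≤ ∑ i ∈ s.filter (pt · ≤ x), ν i ∧
      ∑ i ∈ s.filter (pt · ≤ x), ν i ≤ ∑ k ∈ univ.filter (θ · ≤ x), w k := by
  have hxZ : x ∈ Finset.univ.image θ := by
    obtain ⟨k, rfl⟩ := hx
    exact mem_image_of_mem θ (mem_univ k)
  have hZ : 2 * ((Finset.univ.image θ).card - 1) ≤ 2 * r := by
    have := (card_image_le (s := univ) (f := θ)).trans_eq (card_fin (r + 1))
    omega
  obtain ⟨R, hRdeg, hRle, hReq⟩ := exists_majorant hxZ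
  obtain ⟨q, hqdeg, hqle, hqeq⟩ := exists_minorant hxZ
  have hnodes : ∀ (p : ℝ[X]) (S : Set ℝ), (∀ z ∈ Finset.univ.image θ, p.eval z = S.indicator 1 z) →
      evalSum univ w θ p = ∑ k, w k * S.indicator 1 (θ k) := fun p S hp => by
    simp [hp _ (mem_image_of_mem θ (mem_univ _))]
  constructor
  · calc ∑ k ∈ univ.filter (θ · < x), w k
        = evalSum s ν pt q := by
          rw [hquad q (hqdeg.trans hZ), hnodes q _ hqeq, sum_mul_indicator_Iio]
      _ ≤ ∑ i ∈ s, ν i * (Set.Iio x).indicator 1 (pt i) := by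
          rw [evalSum_apply]
          exact sum_le_sum fun i hi => mul_le_mul_of_nonneg_left (hqle _) (hν i hi)
      _ ≤ ∑ i ∈ s.filter (pt · ≤ x), ν i := by
          rw [sum_mul_indicator_Iio]
          exact sum_le_sum_of_subset_of_nonneg (monotone_filter_right s fun _ _ => le_of_lt)
            fun i hi _ => hν i (mem_of_mem_filter i hi)
  · calc ∑ i ∈ s.filter (pt · ≤ x), ν i
        = ∑ i ∈ s, ν i * (Set.Iic x).indicator 1 (pt i) := (sum_mul_indicator_Iic _ _ _ _).symm
      _ ≤ evalSum s ν pt R := by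
          rw [evalSum_apply]
          exact sum_le_sum fun i hi => mul_le_mul_of_nonneg_left (hRle _) (hν i hi)
      _ = ∑ k ∈ univ.filter (θ · ≤ x), w k := by
          rw [hquad R (hRdeg.trans hZ), hnodes R _ hReq, sum_mul_indicator_Iic]

/-! ### The Chebyshev–Markov–Stieltjes inequality -/

theorem abs_sum_filter_sub_le_inv_sum_sq {ι : Type*} {s : Finset ι} {pt μ ν : ι → ℝ}
    (hμ : ∀ i ∈ s, 0 ≤ μ i) (hν : ∀ i ∈ s, 0 ≤ ν i) {Φ : ℕ → ℝ[X]} {κ : ℕ}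
    (hΦ : IsOrthonormalUpTo (evalSum s μ pt) Φ κ)
    (hνμ : ∀ g : ℝ[X], g.natDegree ≤ 2 * κ → evalSum s ν pt g = evalSum s μ pt g) (x : ℝ) :
    |∑ i ∈ s.filter (pt · ≤ x), ν i - ∑ i ∈ s.filter (pt · ≤ x), μ i| ≤
      (∑ i ∈ range (κ + 1), (Φ i).eval x ^ 2)⁻¹ := by
  obtain ⟨r, hr, θ, w, hxθ, hquad, hw⟩ := hΦ.exists_quadrature_with_node x
  have hμb := sum_filter_lt_le_and_le_sum_filter_le hμ hquad hxθ
  have hνb := sum_filter_lt_le_and_le_sum_filter_le hν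
    (fun g hg => (hνμ g (hg.trans (by omega))).trans (hquad g hg)) hxθ
  have hsplit : ∑ k ∈ univ.filter (θ · ≤ x), w k =
      ∑ k ∈ univ.filter (θ · < x), w k + ∑ k ∈ univ.filter (θ · = x), w k := by
    simp only [sum_filter, ← sum_add_distrib]
    refine sum_congr rfl fun k _ => ?_
    rcases lt_trichotomy (θ k) x with h | h | h
    · simp [h, h.le, h.ne]
    · simp [h]
    · simp [not_le.mpr h, not_lt.mpr h.le, h.ne']
  rw [abs_sub_le_iff, ← eq_inv_of_mul_eq_one_left hw]
  constructor <;> linarith [hμb.1, hμb.2, hνb.1, hνb.2]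

theorem sum_card_filter_eq_card {α : Type*} (s : Finset α) (g : α → ℕ) {n : ℕ}
    (hg : ∀ a ∈ s, g a ≤ n) : ∑ k ∈ range (n + 1), ((s.filter (g · = k)).card : ℝ) = s.card := by
  exact_mod_cast
    (card_eq_sum_card_fiberwise fun a ha => mem_range.mpr (Nat.lt_succ_of_le (hg a ha))).symm

theorem design_cdf_bound_general {X : Type*} [Fintype X] [Nonempty X]
    (d : X → X → ℕ) (n : ℕ)
    (hdiam : ∀ x y, d x y ≤ n)
    (v : ℕ → ℕ)
    (hDDR : ∀ x i, (Finset.univ.filter fun y => d x y = i).card = v i)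
    (N : ℕ)
    (Φ : ℕ → Polynomial ℝ)
    (hdeg : ∀ i ≤ N, (Φ i).degree = i)
    (horth : ∀ i ≤ N, ∀ j ≤ N,
      (1 / (Fintype.card X : ℝ)) * ∑ k ∈ Finset.range (n + 1),
        (v k : ℝ) * (Φ i).eval (k : ℝ) * (Φ j).eval (k : ℝ) = if i = j then 1 else 0)
    (D : Finset X) (hD : D.Nonempty)
    (f : ℕ → ℝ)
    (hf : ∀ k, f k = ((D ×ˢ D).filter fun p => d p.1 p.2 = k).card / (D.card : ℝ) ^ 2)
    (t : ℕ) (htN : t ≤ N)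
    (hdesign : ∀ i, 1 ≤ i → i ≤ t →
      ∑ j ∈ Finset.range (n + 1), f j * (j : ℝ) ^ i
        = ∑ j ∈ Finset.range (n + 1), ((v j : ℝ) / Fintype.card X) * (j : ℝ) ^ i)
    (lam : ℝ → ℝ)
    (hlam : ∀ x : ℝ, lam x = (∑ i ∈ Finset.range (t / 2 + 1), ((Φ i).eval x) ^ 2)⁻¹)
    (FD FX : ℝ → ℝ)
    (hFD : ∀ x : ℝ, FD x = ∑ i ∈ (Finset.range (n + 1)).filter (fun i : ℕ => (i : ℝ) ≤ x), f i)
    (hFX : ∀ x : ℝ, FX x = ∑ i ∈ (Finset.range (n + 1)).filter (fun i : ℕ => (i : ℝ) ≤ x),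
        (v i : ℝ) / Fintype.card X) :
    ∀ x : ℝ, |FD x - FX x| ≤ lam x := by
  intro x
  set μ : ℕ → ℝ := fun k => (v k : ℝ) / Fintype.card X
  have hμ1 : ∑ k ∈ range (n + 1), μ k = 1 := by
    obtain ⟨x₀⟩ := ‹Nonempty X›
    have hv : ∑ k ∈ range (n + 1), (v k : ℝ) = Fintype.card X := by
      rw [← card_univ, ← sum_card_filter_eq_card univ (d x₀) fun y _ => hdiam x₀ y]
      simp [hDDR]
    rw [← sum_div, hv, div_self (by positivity)]
  have hf1 : ∑ k ∈ range (n + 1), f k = 1 := by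
    simp only [hf, ← sum_div]
    rw [sum_card_filter_eq_card (D ×ˢ D) (fun p => d p.1 p.2) fun p _ => hdiam p.1 p.2,
      card_product, Nat.cast_mul, ← sq, div_self (by positivity)]
  have hΦ : IsOrthonormalUpTo (evalSum (range (n + 1)) μ Nat.cast) Φ (t / 2) := by
    refine ⟨fun i hi => hdeg i (by omega), fun i hi j hj => ?_⟩
    rw [← horth i (by omega) j (by omega), evalSum_apply, mul_sum]
    exact sum_congr rfl fun k _ => by simp only [μ, eval_mul]; ring
  have hmom : ∀ g : ℝ[X], g.natDegree ≤ t →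
      evalSum (range (n + 1)) f Nat.cast g = evalSum (range (n + 1)) μ Nat.cast g :=
    fun g => map_eq_of_map_X_pow_eq fun e he => by
      rcases Nat.eq_zero_or_pos e with rfl | he0
      · simp [hf1, hμ1]
      · simpa using hdesign e he0 he
  rw [hFD, hFX, hlam]
  exact abs_sum_filter_sub_le_inv_sum_sq (fun k _ => by positivity)
    (fun k _ => by rw [hf]; positivity) hΦ (fun g hg => hmom g (hg.trans (Nat.mul_div_le t 2))) x

/-- If `D` is a `t`-design in a DDR finite metric space, then the c.d.f. of distances
in `D` differs from that of the whole space by at most the Christoffel function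
`λ(x) = (Σ_{i=0}^{⌊t/2⌋} Φ_i(x)²)⁻¹`. -/
theorem design_cdf_bound {X : Type*} [Fintype X] [Nonempty X]
    (d : X → X → ℕ) (n : ℕ)
    (hsymm : ∀ x y, d x y = d y x)
    (hzero : ∀ x y, d x y = 0 ↔ x = y)
    (htri : ∀ x y z, d x y ≤ d x z + d z y)
    (hdiam : ∀ x y, d x y ≤ n)
    (v : ℕ → ℕ)
    (hDDR : ∀ x i, (Finset.univ.filter fun y => d x y = i).card = v i)
    (N : ℕ) (hN : N ≤ n)
    (Φ : ℕ → Polynomial ℝ)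
    (hdeg : ∀ i ≤ N, (Φ i).degree = i)
    (horth : ∀ i ≤ N, ∀ j ≤ N,
      (1 / (Fintype.card X : ℝ)) * ∑ k ∈ Finset.range (n + 1),
        (v k : ℝ) * (Φ i).eval (k : ℝ) * (Φ j).eval (k : ℝ) = if i = j then 1 else 0)
    (D : Finset X) (hD : D.Nonempty)
    (f : ℕ → ℝ)
    (hf : ∀ k, f k = ((D ×ˢ D).filter fun p => d p.1 p.2 = k).card / (D.card : ℝ) ^ 2)
    (t : ℕ) (ht1 : 1 ≤ t) (htN : t ≤ N)
    (hdesign : ∀ i, 1 ≤ i → i ≤ t →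
      ∑ j ∈ Finset.range (n + 1), f j * (j : ℝ) ^ i
        = ∑ j ∈ Finset.range (n + 1), ((v j : ℝ) / Fintype.card X) * (j : ℝ) ^ i)
    (lam : ℝ → ℝ)
    (hlam : ∀ x : ℝ, lam x = (∑ i ∈ Finset.range (t / 2 + 1), ((Φ i).eval x) ^ 2)⁻¹)
    (FD FX : ℝ → ℝ)
    (hFD : ∀ x : ℝ, FD x = ∑ i ∈ (Finset.range (n + 1)).filter (fun i : ℕ => (i : ℝ) ≤ x), f i)
    (hFX : ∀ x : ℝ, FX x = ∑ i ∈ (Finset.range (n + 1)).filter (fun i : ℕ => (i : ℝ) ≤ x),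
        (v i : ℝ) / Fintype.card X) :
    ∀ x : ℝ, |FD x - FX x| ≤ lam x :=
  design_cdf_bound_general d n hdiam v hDDR N Φ hdeg horth D hD f hf t htN hdesign lam hlam FD FX
    hFD hFX
end

section
/- If D is a binary orthogonal array with n columns of strength at least 5, then for every x, |F_D(x) − F_X(x)| < 2(n−1)/(3n−2), where F_X is the c.d.f. of the binomial distribution F_X(x) = 2⁻ⁿ Σ_{i ≤ x} C(n,i) and F_D is the c.d.f. of the Hamming distance distribution of D. -/
/-!
Strength 2 already forces the Hamming distance between two independent uniform rows of `D` to
have the mean `n / 2` and the variance `n / 4` of the binomial distribution `Bin(n, 1/2)`: both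
moments are sums over one or two coordinates of agreement counts, which an orthogonal array
balances. Below the median, Cantelli's inequality gives `F_D(k) ≤ (n/4) / (n/4 + (n/2 - k)²)`,
while the binomial c.d.f. lies within `(n/2 - k) c` of `1/2`, where `c = C(n, ⌊n/2⌋) / 2ⁿ`
satisfies `3 n c² ≤ 2`. Far from the mean the first bound is at most `3/5`; near the mean the
two bounds together give `F_D(k) - F_X(k) ≤ 3/5`. Above the median the same argument applies to
`n - d`, and `3/5 < 2(n - 1)/(3n - 2)` once `n ≥ 5`.
-/

open Finset

theorem Nat.three_mul_add_one_mul_centralBinom_sq_le (m : ℕ) :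
    (3 * m + 1) * m.centralBinom ^ 2 ≤ 16 ^ m := by
  induction m with
  | zero => simp
  | succ m ih =>
    have hrec := Nat.succ_mul_centralBinom_succ m
    have hpoly : (3 * m + 4) * (2 * (2 * m + 1)) ^ 2 ≤ 16 * (m + 1) ^ 2 * (3 * m + 1) := by
      ring_nf; omega
    refine Nat.le_of_mul_le_mul_left ?_ (by positivity : 0 < (m + 1) ^ 2)
    calc (m + 1) ^ 2 * ((3 * (m + 1) + 1) * (m + 1).centralBinom ^ 2)
        = (3 * m + 4) * (2 * (2 * m + 1)) ^ 2 * m.centralBinom ^ 2 := by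
          rw [mul_left_comm, ← mul_pow, hrec]; ring
      _ ≤ 16 * (m + 1) ^ 2 * (3 * m + 1) * m.centralBinom ^ 2 := Nat.mul_le_mul_right _ hpoly
      _ ≤ (m + 1) ^ 2 * 16 ^ (m + 1) := by
          rw [pow_succ 16]; nlinarith [ih]

theorem Nat.three_mul_choose_half_sq_le (n : ℕ) : 3 * n * n.choose (n / 2) ^ 2 ≤ 2 * 4 ^ n := by
  obtain ⟨m, rfl | rfl⟩ := Nat.even_or_odd' n
  · have h := Nat.three_mul_add_one_mul_centralBinom_sq_le m
    rw [show 2 * m / 2 = m by omega, ← Nat.centralBinom_eq_two_mul_choose, pow_mul]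
    norm_num
    nlinarith [Nat.zero_le (m.centralBinom ^ 2)]
  · have hhalf : (m + 1).centralBinom = 2 * (2 * m + 1).choose m := by
      rw [Nat.centralBinom_eq_two_mul_choose, show 2 * (m + 1) = 2 * m + 1 + 1 by ring,
        Nat.choose_succ_succ, Nat.choose_symm_half]; ring
    have h := Nat.three_mul_add_one_mul_centralBinom_sq_le (m + 1)
    rw [show (2 * m + 1) / 2 = m by omega, pow_succ 4, pow_mul]
    rw [hhalf, pow_succ 16] at h
    norm_num
    nlinarith [Nat.zero_le ((2 * m + 1).choose m ^ 2)]

theorem Nat.sum_range_choose_add_sum_range_choose {n k : ℕ} (hk : k < n) :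
    ∑ i ∈ range (k + 1), n.choose i + ∑ i ∈ range (n - k), n.choose i = 2 ^ n := by
  have hreflect : ∑ i ∈ range (n - k), n.choose i = ∑ i ∈ Ico (k + 1) (n + 1), n.choose i := by
    rw [range_eq_Ico, ← sum_congr rfl fun i hi => Nat.choose_symm (n := n) (k := i) (by
      simp only [mem_Ico] at hi; omega), sum_Ico_reflect _ _ (by omega)]
    congr 2; omega
  rw [hreflect, sum_range_add_sum_Ico _ (by omega), Nat.sum_range_choose]

theorem Nat.two_mul_sum_range_choose_le {n k : ℕ} (hk : 2 * k < n) :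
    2 * ∑ i ∈ range (k + 1), n.choose i ≤ 2 ^ n := by
  have htail : ∑ i ∈ range (k + 1), n.choose i ≤ ∑ i ∈ range (n - k), n.choose i :=
    sum_le_sum_of_subset (range_subset_range.2 (by omega))
  linarith [Nat.sum_range_choose_add_sum_range_choose (n := n) (k := k) (by omega)]

theorem Nat.two_pow_le_two_mul_sum_range_choose_add {n k : ℕ} (hk : 2 * k < n) :
    2 ^ n ≤ 2 * ∑ i ∈ range (k + 1), n.choose i + (n - 1 - 2 * k) * n.choose (n / 2) := by
  have hmiddle : ∑ i ∈ Ico (k + 1) (n - k), n.choose i ≤ (n - 1 - 2 * k) * n.choose (n / 2) := by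
    have := sum_le_card_nsmul (Ico (k + 1) (n - k)) n.choose _ fun i _ => Nat.choose_le_middle i n
    rwa [Nat.card_Ico, smul_eq_mul, show n - k - (k + 1) = n - 1 - 2 * k by omega] at this
  have htail := sum_range_add_sum_Ico (fun i => n.choose i) (show k + 1 ≤ n - k by omega)
  linarith [Nat.sum_range_choose_add_sum_range_choose (n := n) (k := k) (by omega)]

theorem Finset.filter_natCast_le_floor {β : Type*} (s : Finset β) (g : β → ℕ) {x : ℝ}
    (hx : 0 ≤ x) :
    s.filter (fun b => (g b : ℝ) ≤ x) = s.filter (fun b => (g b : ℝ) ≤ (⌊x⌋₊ : ℕ)) :=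
  filter_congr fun b _ => by rw [Nat.cast_le, Nat.le_floor_iff hx]

theorem Finset.filter_natCast_le_of_neg {β : Type*} (s : Finset β) (g : β → ℕ) {x : ℝ}
    (hx : x < 0) : s.filter (fun b => (g b : ℝ) ≤ x) = ∅ :=
  filter_false_of_mem fun b _ => by linarith [(g b).cast_nonneg (α := ℝ)]

noncomputable def binomialCDF (n : ℕ) (x : ℝ) : ℝ :=
  (∑ i ∈ (range (n + 1)).filter (fun i : ℕ => (i : ℝ) ≤ x), (n.choose i : ℝ)) / 2 ^ n

theorem binomialCDF_floor (n : ℕ) {x : ℝ} (hx : 0 ≤ x) : binomialCDF n x = binomialCDF n ⌊x⌋₊ := by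
  unfold binomialCDF
  rw [filter_natCast_le_floor (range (n + 1)) (fun i => i) hx]

theorem binomialCDF_of_neg (n : ℕ) {x : ℝ} (hx : x < 0) : binomialCDF n x = 0 := by
  unfold binomialCDF
  rw [filter_natCast_le_of_neg (range (n + 1)) (fun i => i) hx, sum_empty, zero_div]

theorem binomialCDF_natCast (n k : ℕ) :
    binomialCDF n k = (∑ i ∈ range (k + 1), (n.choose i : ℝ)) / 2 ^ n := by
  rw [binomialCDF]
  congr 1
  refine sum_subset (fun i hi => ?_) fun i hi hi' => ?_
  · simp only [mem_filter, mem_range, Nat.cast_le] at hi ⊢; omega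
  · simp only [mem_filter, mem_range, Nat.cast_le, not_and, not_le] at hi hi'
    rw [Nat.choose_eq_zero_of_lt (by omega), Nat.cast_zero]

theorem binomialCDF_natCast_of_le {n k : ℕ} (hk : n ≤ k) : binomialCDF n k = 1 := by
  rw [binomialCDF_natCast, ← Nat.cast_sum, ← sum_range_add_sum_Ico _ (show n + 1 ≤ k + 1 by omega),
    Nat.sum_range_choose, sum_eq_zero fun i hi => Nat.choose_eq_zero_of_lt (by simp at hi; omega)]
  simp

theorem binomialCDF_natCast_add_binomialCDF_natCast {n k : ℕ} (hk : k < n) :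
    binomialCDF n k + binomialCDF n (n - 1 - k : ℕ) = 1 := by
  rw [binomialCDF_natCast, binomialCDF_natCast, show n - 1 - k + 1 = n - k by omega, ← add_div,
    ← Nat.cast_sum, ← Nat.cast_sum, ← Nat.cast_add, Nat.sum_range_choose_add_sum_range_choose hk]
  simp

theorem binomialCDF_nonneg (n : ℕ) (x : ℝ) : 0 ≤ binomialCDF n x := by
  unfold binomialCDF; positivity

theorem binomialCDF_natCast_le_half {n k : ℕ} (hk : 2 * k < n) : binomialCDF n k ≤ 1 / 2 := by
  have h : ((2 * ∑ i ∈ range (k + 1), n.choose i : ℕ) : ℝ) ≤ (2 ^ n : ℕ) :=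
    Nat.cast_le.2 (Nat.two_mul_sum_range_choose_le hk)
  rw [binomialCDF_natCast, div_le_iff₀ (by positivity)]
  push_cast at h
  linarith

theorem half_sub_mul_le_binomialCDF_natCast {n k : ℕ} (hk : 2 * k < n) :
    1 / 2 - (n / 2 - k) * (n.choose (n / 2) / 2 ^ n) ≤ binomialCDF n k := by
  have h : ((2 ^ n : ℕ) : ℝ) ≤ (2 * ∑ i ∈ range (k + 1), n.choose i
      + (n - 1 - 2 * k) * n.choose (n / 2) : ℕ) :=
    Nat.cast_le.2 (Nat.two_pow_le_two_mul_sum_range_choose_add hk)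
  rw [Nat.cast_add, Nat.cast_mul, Nat.cast_mul, Nat.cast_sub (by omega),
    Nat.cast_sub (by omega)] at h
  rw [binomialCDF_natCast, ← sub_nonneg]
  have h2n : (0 : ℝ) < 2 ^ n := by positivity
  field_simp
  push_cast at h ⊢
  nlinarith [(n.choose (n / 2)).cast_nonneg (α := ℝ)]

theorem three_mul_mul_choose_half_div_sq_le (n : ℕ) :
    3 * n * ((n.choose (n / 2) : ℝ) / 2 ^ n) ^ 2 ≤ 2 := by
  have h : ((3 * n * n.choose (n / 2) ^ 2 : ℕ) : ℝ) ≤ (2 * 4 ^ n : ℕ) :=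
    Nat.cast_le.2 (Nat.three_mul_choose_half_sq_le n)
  rw [div_pow, ← pow_mul, mul_comm n 2, pow_mul, ← mul_div_assoc, div_le_iff₀ (by positivity)]
  push_cast at h
  norm_num
  linarith

section OrthogonalArray

variable {ι α : Type*} [Fintype ι] [DecidableEq α]

theorem card_sub_hammingDist_eq_sum (u v : ι → α) :
    (Fintype.card ι : ℝ) - hammingDist u v = ∑ i, if v i = u i then 1 else 0 := by
  rw [sum_boole, hammingDist, sub_eq_iff_eq_add, ← Nat.cast_add, ← card_univ,
    ← card_filter_add_card_filter_not (fun i => v i = u i)]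
  simp only [eq_comm, ne_eq]

variable [DecidableEq ι]

def IsOrthogonalArray (D : Finset (ι → α)) (t : ℕ) : Prop :=
  ∀ s : Finset ι, #s = t → ∀ u w : ι → α,
    #(D.filter fun x => ∀ i ∈ s, x i = u i) = #(D.filter fun x => ∀ i ∈ s, x i = w i)

variable [Fintype α]

theorem card_filter_forall_notMem_eq (s : Finset ι) (u : ι → α) :
    #(univ.filter fun v : ι → α => ∀ i ∉ s, v i = u i) = Fintype.card α ^ #s := by
  have hpi : (univ.filter fun v : ι → α => ∀ i ∉ s, v i = u i)
      = Fintype.piFinset fun i => if i ∈ s then univ else {u i} := by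
    ext v
    simp only [mem_filter, mem_univ, true_and, Fintype.mem_piFinset]
    refine forall_congr' fun i => ?_
    by_cases hi : i ∈ s <;> simp [hi]
  rw [hpi, Fintype.card_piFinset]
  simp only [apply_ite card, card_univ, card_singleton]
  rw [prod_ite_mem, univ_inter, prod_const]

theorem card_filter_forall_mem_eq_pow_mul {D : Finset (ι → α)} {S s : Finset ι} {c : ℕ}
    (hS : ∀ w : ι → α, #(D.filter fun x => ∀ i ∈ S, x i = w i) = c) (hsS : s ⊆ S) (u : ι → α) :
    #(D.filter fun x => ∀ i ∈ s, x i = u i) = Fintype.card α ^ (#S - #s) * c := by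
  -- sort the rows agreeing with `u` on `s` by their restriction to `S`
  set T := univ.filter fun w : ι → α => ∀ i ∉ S \ s, w i = u i
  let restrict : (ι → α) → ι → α := fun x i => if i ∈ S then x i else u i
  have hmaps : Set.MapsTo restrict (D.filter fun x => ∀ i ∈ s, x i = u i) T := by
    intro x hx
    simp only [coe_filter, Set.mem_ofPred_eq] at hx
    simp only [T, coe_filter, mem_univ, true_and, Set.mem_ofPred_eq, mem_sdiff, not_and, not_not]
    intro i hi
    by_cases hiS : i ∈ S
    · simp [restrict, hiS, hx.2 i (hi hiS)]
    · simp [restrict, hiS]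
  have hfiber : ∀ w ∈ T, #((D.filter fun x => ∀ i ∈ s, x i = u i).filter fun x => restrict x = w)
      = c := by
    intro w hw
    simp only [T, mem_filter, mem_univ, true_and, mem_sdiff, not_and, not_not] at hw
    rw [← hS w, filter_filter]
    congr 1
    refine filter_congr fun x _ => ⟨fun ⟨_, hxw⟩ i hi => ?_, fun hxw => ⟨fun i hi => ?_, ?_⟩⟩
    · simpa [restrict, hi] using congrFun hxw i
    · rw [hxw i (hsS hi), hw i fun _ => hi]
    · funext i
      by_cases hiS : i ∈ S
      · simp [restrict, hiS, hxw i hiS]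
      · simp [restrict, hiS, hw i fun h => absurd h hiS]
  rw [card_eq_sum_card_fiberwise hmaps, sum_congr rfl hfiber, sum_const, smul_eq_mul,
    card_filter_forall_notMem_eq, card_sdiff_of_subset hsS]

theorem IsOrthogonalArray.pow_card_mul_card_filter_eq {D : Finset (ι → α)} {t : ℕ}
    (hD : IsOrthogonalArray D t) (ht : t ≤ Fintype.card ι) {s : Finset ι} (hs : #s ≤ t)
    (u : ι → α) : Fintype.card α ^ #s * #(D.filter fun x => ∀ i ∈ s, x i = u i) = #D := by
  obtain ⟨S, hsS, -, hS⟩ := exists_subsuperset_card_eq (subset_univ s) hs (by simpa using ht)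
  have hconst : ∀ w : ι → α, #(D.filter fun x => ∀ i ∈ S, x i = w i)
      = #(D.filter fun x => ∀ i ∈ S, x i = u i) := fun w => hD S hS w u
  have hall := card_filter_forall_mem_eq_pow_mul hconst (empty_subset S) u
  simp only [notMem_empty, IsEmpty.forall_iff, implies_true, filter_true] at hall
  rw [card_filter_forall_mem_eq_pow_mul hconst hsS u, hall, ← mul_assoc, ← pow_add, hS,
    card_empty, Nat.add_sub_cancel' hs, Nat.sub_zero]

namespace IsOrthogonalArray

variable [Nonempty α] {D : Finset (ι → α)} {t : ℕ}

theorem card_filter_eq_div (hD : IsOrthogonalArray D t) (ht : t ≤ Fintype.card ι)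
    {s : Finset ι} (hs : #s ≤ t) (u : ι → α) :
    (#(D.filter fun x => ∀ i ∈ s, x i = u i) : ℝ) = #D / (Fintype.card α : ℝ) ^ #s := by
  rw [eq_div_iff (by positivity), ← hD.pow_card_mul_card_filter_eq ht hs u]
  push_cast; ring

theorem sum_agreements (hD : IsOrthogonalArray D t) (ht1 : 1 ≤ t) (ht : t ≤ Fintype.card ι)
    (u : ι → α) :
    ∑ v ∈ D, ∑ i, (if v i = u i then 1 else 0 : ℝ)
      = Fintype.card ι * (#D / Fintype.card α) := by
  rw [sum_comm]
  simp_rw [sum_boole]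
  simpa using sum_congr rfl fun i (_ : i ∈ univ) =>
    hD.card_filter_eq_div ht (s := {i}) (by simpa using ht1) u

theorem sum_sq_agreements (hD : IsOrthogonalArray D t) (ht2 : 2 ≤ t) (ht : t ≤ Fintype.card ι)
    (u : ι → α) :
    ∑ v ∈ D, (∑ i, (if v i = u i then 1 else 0 : ℝ)) ^ 2
      = Fintype.card ι * (#D / Fintype.card α)
        + Fintype.card ι * (Fintype.card ι - 1) * (#D / Fintype.card α ^ 2) := by
  have hpair : ∀ v : ι → α, (∑ i, (if v i = u i then 1 else 0 : ℝ)) ^ 2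
      = ∑ i, ∑ j, if ∀ k ∈ ({i, j} : Finset ι), v k = u k then 1 else 0 := by
    intro v
    simp only [sq, sum_mul_sum, ite_zero_mul_ite_zero, one_mul, forall_mem_insert,
      mem_singleton, forall_eq]
  have hrow : ∀ i : ι, ∑ j, (#D / (Fintype.card α : ℝ) ^ #({i, j} : Finset ι))
      = #D / Fintype.card α + (Fintype.card ι - 1) * (#D / Fintype.card α ^ 2) := by
    intro i
    rw [← add_sum_erase _ _ (mem_univ i), sum_congr rfl fun j hj =>
      by rw [card_pair (ne_of_mem_erase hj).symm], sum_const, card_erase_of_mem (mem_univ i),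
      card_univ, nsmul_eq_mul, Nat.cast_pred (Fintype.card_pos_iff.2 ⟨i⟩)]
    simp
  simp_rw [hpair]
  rw [sum_comm]
  simp_rw [sum_comm (s := D), sum_boole]
  rw [sum_congr rfl fun i _ => sum_congr rfl fun j _ =>
    hD.card_filter_eq_div ht (s := {i, j}) ((card_le_two).trans ht2) u]
  simp_rw [hrow]
  rw [sum_const, card_univ, nsmul_eq_mul]
  ring

theorem sum_hammingDist (hD : IsOrthogonalArray D t) (ht1 : 1 ≤ t) (ht : t ≤ Fintype.card ι)
    (u : ι → α) :
    ∑ v ∈ D, (hammingDist u v : ℝ) = (#D : ℝ) * (Fintype.card ι * (1 - 1 / Fintype.card α)) := by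
  have hagree := hD.sum_agreements ht1 ht u
  simp_rw [← card_sub_hammingDist_eq_sum, sum_sub_distrib, sum_const, nsmul_eq_mul] at hagree
  have hq : (Fintype.card α : ℝ) ≠ 0 := by positivity
  field_simp at hagree ⊢
  linarith

theorem sum_sq_hammingDist_sub (hD : IsOrthogonalArray D t) (ht2 : 2 ≤ t)
    (ht : t ≤ Fintype.card ι) (u : ι → α) :
    ∑ v ∈ D, ((hammingDist u v : ℝ) - Fintype.card ι * (1 - 1 / Fintype.card α)) ^ 2
      = (#D : ℝ) * (Fintype.card ι * (1 / Fintype.card α) * (1 - 1 / Fintype.card α)) := by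
  set n : ℝ := (Fintype.card ι : ℝ)
  set q : ℝ := (Fintype.card α : ℝ)
  set a : (ι → α) → ℝ := fun v => ∑ i, if v i = u i then 1 else 0
  have hsum := hD.sum_agreements (ht1 := by omega) ht u
  have hsq := hD.sum_sq_agreements ht2 ht u
  have hexpand : ∀ v, ((hammingDist u v : ℝ) - n * (1 - 1 / q)) ^ 2
      = a v ^ 2 - 2 * (n / q) * a v + (n / q) ^ 2 := by
    intro v
    rw [show (hammingDist u v : ℝ) = n - a v by linarith [card_sub_hammingDist_eq_sum u v]]
    ring
  rw [sum_congr rfl fun v _ => hexpand v, sum_add_distrib, sum_sub_distrib, ← mul_sum, hsum, hsq,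
    sum_const, nsmul_eq_mul]
  have hq : q ≠ 0 := by positivity
  field_simp
  ring

theorem sum_product_hammingDist (hD : IsOrthogonalArray D t) (ht1 : 1 ≤ t)
    (ht : t ≤ Fintype.card ι) :
    ∑ p ∈ D ×ˢ D, (hammingDist p.1 p.2 : ℝ)
      = (#(D ×ˢ D) : ℝ) * (Fintype.card ι * (1 - 1 / Fintype.card α)) := by
  rw [sum_product, sum_congr rfl fun u _ => hD.sum_hammingDist ht1 ht u, sum_const,
    nsmul_eq_mul, card_product, Nat.cast_mul, mul_assoc]

theorem sum_product_sq_hammingDist_sub (hD : IsOrthogonalArray D t) (ht2 : 2 ≤ t)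
    (ht : t ≤ Fintype.card ι) :
    ∑ p ∈ D ×ˢ D, ((hammingDist p.1 p.2 : ℝ) - Fintype.card ι * (1 - 1 / Fintype.card α)) ^ 2
      = (#(D ×ˢ D) : ℝ) * (Fintype.card ι * (1 / Fintype.card α) * (1 - 1 / Fintype.card α)) := by
  rw [sum_product, sum_congr rfl fun u _ => hD.sum_sq_hammingDist_sub ht2 ht u, sum_const,
    nsmul_eq_mul, card_product, Nat.cast_mul]
  ring

end IsOrthogonalArray

end OrthogonalArray

theorem card_filter_le_mul_le_of_lt_mean {β : Type*} {s : Finset β} {f : β → ℝ} {μ σ2 a : ℝ}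
    (hmean : ∑ x ∈ s, f x = #s * μ) (hvar : ∑ x ∈ s, (f x - μ) ^ 2 = #s * σ2) (ha : a < μ) :
    #(s.filter fun x => f x ≤ a) * (σ2 + (μ - a) ^ 2) ≤ #s * σ2 := by
  set τ := μ - a
  -- Cantelli's trick: Markov's inequality for the square of `τ (μ - f) + σ2`
  have hshift : ∑ x ∈ s, (τ * (μ - f x) + σ2) ^ 2 = #s * σ2 * (σ2 + τ ^ 2) := by
    have hcentered : ∑ x ∈ s, (f x - μ) = 0 := by
      rw [sum_sub_distrib, hmean, sum_const, nsmul_eq_mul, sub_self]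
    rw [sum_congr rfl fun x _ => show (τ * (μ - f x) + σ2) ^ 2
        = τ ^ 2 * (f x - μ) ^ 2 - 2 * τ * σ2 * (f x - μ) + σ2 ^ 2 by ring,
      sum_add_distrib, sum_sub_distrib, ← mul_sum, ← mul_sum, hvar, hcentered, sum_const,
      nsmul_eq_mul]
    ring
  rcases le_or_gt (σ2 + τ ^ 2) 0 with hneg | hpos
  · have : 0 ≤ (#s : ℝ) * σ2 := hvar ▸ sum_nonneg fun x _ => sq_nonneg _
    nlinarith [(#(s.filter fun x => f x ≤ a)).cast_nonneg (α := ℝ)]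
  have hbound : #(s.filter fun x => f x ≤ a) * (σ2 + τ ^ 2) ^ 2 ≤ #s * σ2 * (σ2 + τ ^ 2) := by
    calc #(s.filter fun x => f x ≤ a) * (σ2 + τ ^ 2) ^ 2
        = ∑ x ∈ s.filter fun x => f x ≤ a, (σ2 + τ ^ 2) ^ 2 := by rw [sum_const, nsmul_eq_mul]
      _ ≤ ∑ x ∈ s.filter fun x => f x ≤ a, (τ * (μ - f x) + σ2) ^ 2 := by
          refine sum_le_sum fun x hx => pow_le_pow_left₀ hpos.le ?_ 2
          have : τ ≤ μ - f x := by linarith [(mem_filter.1 hx).2]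
          nlinarith [sub_pos.2 ha]
      _ ≤ ∑ x ∈ s, (τ * (μ - f x) + σ2) ^ 2 :=
          sum_le_sum_of_subset_of_nonneg (filter_subset _ _) fun _ _ _ => sq_nonneg _
      _ = #s * σ2 * (σ2 + τ ^ 2) := hshift
  rw [sq, ← mul_assoc] at hbound
  exact le_of_mul_le_mul_right hbound hpos

theorem abs_sub_le_three_fifths {n p q t c : ℝ} (hn : 0 < n)
    (hnc : 3 * n * c ^ 2 ≤ 2) (hp : 0 ≤ p) (hpt : p * (n / 4 + t ^ 2) ≤ n / 4)
    (hq : 0 ≤ q) (hq2 : q ≤ 1 / 2) (hqt : 1 / 2 - t * c ≤ q) : |p - q| ≤ 3 / 5 := by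
  refine abs_le.2 ⟨by linarith, ?_⟩
  rcases le_or_gt n (6 * t ^ 2) with hfar | hnear
  · nlinarith
  -- near the mean, Cantelli's bound on `p` and the deficit `t * c` of `q` cannot both be large
  suffices hsum : p + t * c ≤ 11 / 10 by linarith
  have htc : t * c * (n / 4 + t ^ 2) ≤ n / 40 + 11 / 10 * t ^ 2 := by
    refine le_of_pow_le_pow_left₀ two_ne_zero (by positivity) ?_
    refine le_of_mul_le_mul_left ?_ (by positivity : 0 < 3 * n)
    calc 3 * n * (t * c * (n / 4 + t ^ 2)) ^ 2
        = 3 * n * c ^ 2 * t ^ 2 * (n / 4 + t ^ 2) ^ 2 := by ring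
      _ ≤ 2 * t ^ 2 * (n / 4 + t ^ 2) ^ 2 := by gcongr
      _ ≤ 3 * n * (n / 40 + 11 / 10 * t ^ 2) ^ 2 := by
          have hcube : t ^ 2 * (t ^ 2 * t ^ 2) ≤ n / 6 * (t ^ 2 * t ^ 2) :=
            mul_le_mul_of_nonneg_right (by linarith) (by positivity)
          nlinarith [mul_nonneg hn.le (pow_nonneg (sq_nonneg t) 2),
            mul_nonneg (mul_nonneg hn.le hn.le) (sq_nonneg t), pow_pos hn 3]
  have hpos : 0 < n / 4 + t ^ 2 := by positivity
  nlinarith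

section DistanceCDF

variable {β : Type*} {s : Finset β} {n : ℕ}

theorem abs_card_filter_div_sub_binomialCDF_le_of_two_mul_lt (hs : s.Nonempty) {f : β → ℝ}
    (hmean : ∑ b ∈ s, f b = (#s : ℝ) * (n / 2))
    (hvar : ∑ b ∈ s, (f b - n / 2) ^ 2 = (#s : ℝ) * (n / 4))
    {k : ℕ} (hk : 2 * k < n) :
    |#(s.filter fun b => f b ≤ k) / #s - binomialCDF n k| ≤ 3 / 5 := by
  have hkR : (2 * k : ℝ) < n := by exact_mod_cast hk
  have hcantelli := card_filter_le_mul_le_of_lt_mean hmean hvar (a := k) (by linarith)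
  refine abs_sub_le_three_fifths (t := n / 2 - k) (by linarith)
    (three_mul_mul_choose_half_div_sq_le n) (by positivity) ?_ (binomialCDF_nonneg n k)
    (binomialCDF_natCast_le_half hk) (half_sub_mul_le_binomialCDF_natCast hk)
  rw [div_mul_eq_mul_div, div_le_iff₀ (by exact_mod_cast hs.card_pos)]
  linarith

theorem abs_card_filter_div_sub_binomialCDF_le_of_le_two_mul (hs : s.Nonempty) {g : β → ℕ}
    (hmean : ∑ b ∈ s, (g b : ℝ) = (#s : ℝ) * (n / 2))
    (hvar : ∑ b ∈ s, ((g b : ℝ) - n / 2) ^ 2 = (#s : ℝ) * (n / 4)) {k : ℕ} (hk : n ≤ 2 * k)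
    (hkn : k < n) :
    |#(s.filter fun b => (g b : ℝ) ≤ k) / #s - binomialCDF n k| ≤ 3 / 5 := by
  -- the reflected values `n - g` have the same mean and variance, and their lower tail
  -- at `n - 1 - k` is the upper tail of `g` at `k`
  have hmean' : ∑ b ∈ s, ((n : ℝ) - g b) = (#s : ℝ) * (n / 2) := by
    rw [sum_sub_distrib, hmean, sum_const, nsmul_eq_mul]; ring
  have hvar' : ∑ b ∈ s, ((n : ℝ) - g b - n / 2) ^ 2 = (#s : ℝ) * (n / 4) := by
    rw [← hvar]; exact sum_congr rfl fun b _ => by ring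
  have hreflect := abs_card_filter_div_sub_binomialCDF_le_of_two_mul_lt hs hmean' hvar'
    (k := n - 1 - k) (by omega)
  have htail : s.filter (fun b => (n : ℝ) - g b ≤ (n - 1 - k : ℕ))
      = s.filter (fun b => ¬ (g b : ℝ) ≤ k) := by
    refine filter_congr fun b _ => ?_
    rw [Nat.cast_sub (by omega), Nat.cast_sub (by omega), not_le, Nat.cast_lt,
      ← Nat.add_one_le_iff, ← Nat.cast_le (α := ℝ)]
    push_cast
    constructor <;> intro h <;> linarith
  have hcard : (#(s.filter fun b => ¬ (g b : ℝ) ≤ k) : ℝ)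
      = #s - #(s.filter fun b => (g b : ℝ) ≤ k) := by
    rw [← card_filter_add_card_filter_not (s := s) fun b => (g b : ℝ) ≤ k]; push_cast; ring
  rw [htail, hcard, sub_div, div_self (by exact_mod_cast hs.card_pos.ne'),
    eq_sub_of_add_eq' (binomialCDF_natCast_add_binomialCDF_natCast hkn), sub_sub_sub_cancel_left,
    abs_sub_comm] at hreflect
  exact hreflect

theorem abs_card_filter_div_sub_binomialCDF_le (hs : s.Nonempty) {g : β → ℕ}
    (hg : ∀ b ∈ s, g b ≤ n) (hmean : ∑ b ∈ s, (g b : ℝ) = (#s : ℝ) * (n / 2))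
    (hvar : ∑ b ∈ s, ((g b : ℝ) - n / 2) ^ 2 = (#s : ℝ) * (n / 4)) (x : ℝ) :
    |#(s.filter fun b => (g b : ℝ) ≤ x) / #s - binomialCDF n x| ≤ 3 / 5 := by
  rcases lt_or_ge x 0 with hx | hx
  · rw [filter_natCast_le_of_neg s g hx, binomialCDF_of_neg n hx]; norm_num
  rw [filter_natCast_le_floor s g hx, binomialCDF_floor n hx]
  rcases lt_or_ge (2 * ⌊x⌋₊) n with hlow | hhigh
  · exact abs_card_filter_div_sub_binomialCDF_le_of_two_mul_lt hs hmean hvar hlow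
  rcases lt_or_ge ⌊x⌋₊ n with hxn | hnx
  · exact abs_card_filter_div_sub_binomialCDF_le_of_le_two_mul hs hmean hvar hhigh hxn
  rw [filter_true_of_mem fun b hb => by exact_mod_cast (hg b hb).trans hnx,
    binomialCDF_natCast_of_le hnx, div_self (by exact_mod_cast hs.card_pos.ne')]
  norm_num

end DistanceCDF

theorem three_fifths_lt_two_mul_sub_one_div {n : ℝ} (hn : 5 ≤ n) :
    3 / 5 < 2 * (n - 1) / (3 * n - 2) := by
  rw [lt_div_iff₀ (by linarith)]; linarith

/-- If `D` is a binary orthogonal array of strength at least 5 with `n` columns, then its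
Hamming-distance c.d.f. is uniformly within `2(n−1)/(3n−2)` of the binomial c.d.f. -/
theorem binary_OA_strength5_cdf_bound (n : ℕ) (hn : 5 ≤ n)
    (D : Finset (Fin n → Fin 2)) (hD : D.Nonempty)
    (hOA : ∀ s : Finset (Fin n), s.card = 5 → ∀ u w : Fin n → Fin 2,
      (D.filter fun x => ∀ i ∈ s, x i = u i).card
        = (D.filter fun x => ∀ i ∈ s, x i = w i).card)
    (FD FX : ℝ → ℝ)
    (hFD : ∀ x : ℝ, FD x =
      ((D ×ˢ D).filter fun p => (hammingDist p.1 p.2 : ℝ) ≤ x).card / (D.card : ℝ) ^ 2)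
    (hFX : ∀ x : ℝ, FX x =
      (∑ i ∈ (Finset.range (n + 1)).filter (fun i : ℕ => (i : ℝ) ≤ x), (n.choose i : ℝ)) / 2 ^ n) :
    ∀ x : ℝ, |FD x - FX x| < 2 * ((n : ℝ) - 1) / (3 * n - 2) := by
  intro x
  have hOA5 : IsOrthogonalArray D 5 := fun s hs u w => by convert hOA s hs u w
  have hn' : 5 ≤ Fintype.card (Fin n) := by simpa using hn
  have hmean : ∑ p ∈ D ×ˢ D, (hammingDist p.1 p.2 : ℝ) = (#(D ×ˢ D) : ℝ) * (n / 2) := by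
    rw [hOA5.sum_product_hammingDist (by norm_num) hn', Fintype.card_fin, Fintype.card_fin]; ring
  have hvar : ∑ p ∈ D ×ˢ D, ((hammingDist p.1 p.2 : ℝ) - n / 2) ^ 2
      = (#(D ×ˢ D) : ℝ) * (n / 4) := by
    have := hOA5.sum_product_sq_hammingDist_sub (by norm_num) hn'
    rw [Fintype.card_fin, Fintype.card_fin] at this
    convert this using 3 <;> ring
  have hbound := abs_card_filter_div_sub_binomialCDF_le (hD.product hD)
    (fun p _ => hammingDist_le_card_fintype.trans_eq (Fintype.card_fin n)) hmean hvar x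
  rw [card_product, Nat.cast_mul, ← sq] at hbound
  rw [hFD, hFX]
  exact hbound.trans_lt (three_fifths_lt_two_mul_sub_one_div (by exact_mod_cast hn))
end

section
/- If D is a 2-transitive permutation group on n letters, then the c.d.f. G_D(x) of the number of fixed points of a uniformly random element of D satisfies |G_D(x) − P(x)| < n/(n + (1−x)²) for all x, where P is the c.d.f. of the Poisson distribution with parameter 1. -/
def numFixedPoints {n : ℕ} (ν : Equiv.Perm (Fin n)) : ℕ :=
  (Finset.univ.filter fun i => ν i = i).card

/-!
By Burnside's lemma the average number of fixed points of a finite group acting transitively is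
`1`. Applied to `D` acting on `Fin n` and on `Fin 2 ↪ Fin n` (where `σ` fixes `F (F - 1)`
embeddings, `F` its number of fixed points), 2-transitivity gives `E[F] = E[F (F - 1)] = 1`:
`F` has mean `1` and variance `1`, exactly like a Poisson(1) variable. Cantelli's inequality then
bounds the lower tails (for `x < 1`) and the upper tails (for `x > 1`) of both distributions by
`1 / (1 + (1 - x) ^ 2)`, so the two c.d.f.s differ by at most that, which is less than
`n / (n + (1 - x) ^ 2)`. At `x = 1` the Poisson c.d.f. is `2 / e ∈ (0, 1)`.
-/

open Finset MulAction Equiv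

section Cantelli

variable {α : Type*} {w X : α → ℝ} {m v t : ℝ}

theorem summable_ite_of_nonneg (hw : ∀ a, 0 ≤ w a) (hs : Summable w) (p : α → Prop)
    [DecidablePred p] : Summable fun a => if p a then w a else 0 :=
  hs.of_nonneg_of_le (fun a => by split_ifs <;> simp [hw a])
    (fun a => by split_ifs <;> simp [hw a])

theorem cantelli_lower_tail (hw : ∀ a, 0 ≤ w a) (h0 : HasSum w 1)
    (h1 : HasSum (fun a => w a * X a) m) (h2 : HasSum (fun a => w a * (X a - m) ^ 2) v)
    (ht : 0 < t) (p : α → Prop) [DecidablePred p] (hp : ∀ a, p a → X a ≤ m - t) :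
    ∑' a, (if p a then w a else 0) ≤ v / (v + t ^ 2) := by
  set u := v / t
  have hv : 0 ≤ v := h2.nonneg fun a => mul_nonneg (hw a) (sq_nonneg _)
  have hu : 0 ≤ u := div_nonneg hv ht.le
  have hsecond : HasSum (fun a => w a * (X a - (m + u)) ^ 2) (v + u ^ 2) := by
    have hcentered : HasSum (fun a => w a * (X a - m)) 0 := by
      simpa [mul_sub] using h1.sub (h0.mul_right m)
    have := (h2.sub (hcentered.mul_left (2 * u))).add (h0.mul_right (u ^ 2))
    rw [mul_zero, sub_zero, one_mul] at this
    exact this.congr_fun fun a => by ring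
  -- Markov's inequality for `(X - (m + u)) ^ 2`; the shift `u = v / t` is the optimal one.
  have hmarkov : (t + u) ^ 2 * ∑' a, (if p a then w a else 0) ≤ v + u ^ 2 := by
    refine hasSum_le (fun a => ?_) ((summable_ite_of_nonneg hw h0.summable p).hasSum.mul_left _) hsecond
    split_ifs with hpa
    · have : t + u ≤ m + u - X a := by linarith [hp a hpa]
      rw [mul_comm]
      exact mul_le_mul_of_nonneg_left (by nlinarith) (hw a)
    · simpa using mul_nonneg (hw a) (sq_nonneg _)
  have htu : t * u = v := mul_div_cancel₀ v ht.ne'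
  have hscaled : (t ^ 2 + v) * ((t ^ 2 + v) * ∑' a, (if p a then w a else 0)) ≤ (t ^ 2 + v) * v :=
    calc (t ^ 2 + v) * ((t ^ 2 + v) * ∑' a, (if p a then w a else 0))
        = t ^ 2 * ((t + u) ^ 2 * ∑' a, (if p a then w a else 0)) := by rw [← htu]; ring
      _ ≤ t ^ 2 * (v + u ^ 2) := mul_le_mul_of_nonneg_left hmarkov (sq_nonneg t)
      _ = (t ^ 2 + v) * v := by rw [← htu]; ring
  rw [le_div_iff₀ (by positivity), mul_comm, add_comm]
  exact le_of_mul_le_mul_left hscaled (by positivity)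

theorem cantelli_upper_tail (hw : ∀ a, 0 ≤ w a) (h0 : HasSum w 1)
    (h1 : HasSum (fun a => w a * X a) m) (h2 : HasSum (fun a => w a * (X a - m) ^ 2) v)
    (ht : 0 < t) (p : α → Prop) [DecidablePred p] (hp : ∀ a, p a → m + t ≤ X a) :
    ∑' a, (if p a then w a else 0) ≤ v / (v + t ^ 2) :=
  cantelli_lower_tail (X := fun a => -X a) (m := -m) hw h0 (by simpa using h1.neg)
    (by convert h2 using 2; ring) ht p fun a hpa => by linarith [hp a hpa]

end Cantelli

section UnitMeanAndVariance

variable {α β : Type*}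

structure HasUnitMeanAndVariance (w X : α → ℝ) : Prop where
  nonneg : ∀ a, 0 ≤ w a
  hasSum : HasSum w 1
  hasSum_mul : HasSum (fun a => w a * X a) 1
  hasSum_mul_sub_one_sq : HasSum (fun a => w a * (X a - 1) ^ 2) 1

noncomputable def weightedCDF (w X : α → ℝ) (x : ℝ) : ℝ :=
  ∑' a, if X a ≤ x then w a else 0

namespace HasUnitMeanAndVariance

variable {w X : α → ℝ}

theorem of_hasSum_mul_mul_sub_one (hw : ∀ a, 0 ≤ w a) (h0 : HasSum w 1)
    (h1 : HasSum (fun a => w a * X a) 1) (h2 : HasSum (fun a => w a * (X a * (X a - 1))) 1) :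
    HasUnitMeanAndVariance w X where
  nonneg := hw
  hasSum := h0
  hasSum_mul := h1
  hasSum_mul_sub_one_sq := by
    have := (h2.sub h1).add h0
    norm_num at this
    exact this.congr_fun fun a => by ring

variable (hX : HasUnitMeanAndVariance w X)
include hX

theorem weightedCDF_nonneg (x : ℝ) : 0 ≤ weightedCDF w X x :=
  tsum_nonneg fun a => by split_ifs <;> simp [hX.nonneg a]

theorem weightedCDF_le_one (x : ℝ) : weightedCDF w X x ≤ 1 :=
  hX.hasSum.tsum_eq ▸ (summable_ite_of_nonneg hX.nonneg hX.hasSum.summable _).tsum_le_tsum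
    (fun a => by split_ifs <;> simp [hX.nonneg a]) hX.hasSum.summable

theorem one_sub_weightedCDF (x : ℝ) :
    1 - weightedCDF w X x = ∑' a, if x < X a then w a else 0 := by
  rw [weightedCDF, ← hX.hasSum.tsum_eq, sub_eq_iff_eq_add', ← Summable.tsum_add
    (summable_ite_of_nonneg hX.nonneg hX.hasSum.summable _) (summable_ite_of_nonneg hX.nonneg hX.hasSum.summable _)]
  exact tsum_congr fun a => by by_cases h : X a ≤ x <;> simp [h, not_lt.mpr, lt_of_not_ge]

theorem weightedCDF_le (x : ℝ) (hx : x < 1) : weightedCDF w X x ≤ 1 / (1 + (1 - x) ^ 2) :=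
  cantelli_lower_tail hX.nonneg hX.hasSum hX.hasSum_mul hX.hasSum_mul_sub_one_sq
    (sub_pos.mpr hx) _ fun a ha => by linarith

theorem one_sub_weightedCDF_le (x : ℝ) (hx : 1 < x) :
    1 - weightedCDF w X x ≤ 1 / (1 + (1 - x) ^ 2) := by
  rw [hX.one_sub_weightedCDF, ← neg_sq, neg_sub]
  exact cantelli_upper_tail hX.nonneg hX.hasSum hX.hasSum_mul hX.hasSum_mul_sub_one_sq
    (sub_pos.mpr hx) _ fun a ha => by linarith

theorem abs_weightedCDF_sub_le {w' Y : β → ℝ} (hY : HasUnitMeanAndVariance w' Y) {x : ℝ}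
    (hx : x ≠ 1) : |weightedCDF w X x - weightedCDF w' Y x| ≤ 1 / (1 + (1 - x) ^ 2) := by
  have h0 := hX.weightedCDF_nonneg x
  have h0' := hY.weightedCDF_nonneg x
  have h1 := hX.weightedCDF_le_one x
  have h1' := hY.weightedCDF_le_one x
  rw [abs_sub_le_iff]
  rcases hx.lt_or_gt with hx | hx
  · have := hX.weightedCDF_le x hx
    have := hY.weightedCDF_le x hx
    constructor <;> linarith
  · have := hX.one_sub_weightedCDF_le x hx
    have := hY.one_sub_weightedCDF_le x hx
    constructor <;> linarith

end HasUnitMeanAndVariance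

end UnitMeanAndVariance

section Poisson

noncomputable def poissonOneWeight (k : ℕ) : ℝ := Real.exp (-1) / k.factorial

theorem hasSum_descFactorial_mul_poissonOneWeight (j : ℕ) :
    HasSum (fun k => poissonOneWeight k * k.descFactorial j) 1 := by
  rw [← hasSum_nat_add_iff' j, Finset.sum_eq_zero fun k hk => by
    simp [Nat.descFactorial_eq_zero_iff_lt.mpr (Finset.mem_range.mp hk)], sub_zero]
  have hexp := (NormedSpace.expSeries_div_hasSum_exp (1 : ℝ)).mul_left (Real.exp (-1))
  rw [← Real.exp_eq_exp_ℝ, ← Real.exp_add, neg_add_cancel, Real.exp_zero] at hexp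
  refine hexp.congr_fun fun i => ?_
  have hfac := Nat.factorial_mul_descFactorial (Nat.le_add_left j i)
  rw [Nat.add_sub_cancel] at hfac
  rw [one_pow, poissonOneWeight, ← hfac]
  push_cast
  field_simp

theorem hasUnitMeanAndVariance_poissonOneWeight :
    HasUnitMeanAndVariance poissonOneWeight (fun k => (k : ℝ)) := by
  refine .of_hasSum_mul_mul_sub_one (fun k => by unfold poissonOneWeight; positivity)
    ?_ ?_ ?_
  · simpa using hasSum_descFactorial_mul_poissonOneWeight 0
  · simpa using hasSum_descFactorial_mul_poissonOneWeight 1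
  · simpa only [Nat.cast_descFactorial_two] using hasSum_descFactorial_mul_poissonOneWeight 2

theorem weightedCDF_poissonOneWeight_one :
    weightedCDF poissonOneWeight (fun k => (k : ℝ)) 1 = 2 * Real.exp (-1) := by
  rw [weightedCDF, tsum_eq_sum (s := range 2) fun k hk => if_neg <| not_le.mpr <| by
    simp only [mem_range, not_lt] at hk
    exact_mod_cast hk]
  simp [sum_range_succ, poissonOneWeight]
  ring

theorem weightedCDF_poissonOneWeight_one_mem_Ioo :
    weightedCDF poissonOneWeight (fun k => (k : ℝ)) 1 ∈ Set.Ioo 0 1 := by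
  rw [weightedCDF_poissonOneWeight_one, Real.exp_neg, ← div_eq_mul_inv]
  exact ⟨by positivity, (div_lt_one (Real.exp_pos 1)).mpr (by linarith [Real.exp_one_gt_d9])⟩

end Poisson

namespace MulAction

variable {G X : Type*} [Group G] [MulAction G X]

def fixedByEmbeddingEquiv (α : Type*) (g : G) :
    fixedBy (α ↪ X) g ≃ (α ↪ fixedBy X g) where
  toFun e := ⟨fun a => ⟨e.1 a, congrFun (congrArg DFunLike.coe e.2) a⟩,
    fun a b h => e.1.injective (congrArg Subtype.val h)⟩
  invFun f := ⟨f.trans (Function.Embedding.subtype _), by ext a; exact (f a).2⟩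
  left_inv e := rfl
  right_inv f := rfl

theorem sum_card_fixedBy_eq_card_of_isPretransitive [Fintype G] [Finite X] [Nonempty X]
    [IsPretransitive G X] : ∑ g : G, Nat.card (fixedBy X g) = Nat.card G := by
  classical
  have := Fintype.ofFinite X
  obtain ⟨x⟩ := ‹Nonempty X›
  have horbits : Fintype.card (orbitRel.Quotient G X) = 1 := Fintype.card_eq_one_iff.mpr
    ⟨⟦x⟧, fun q => Quotient.inductionOn q fun y => Quotient.sound (exists_smul_eq G x y)⟩
  simp only [Nat.card_eq_fintype_card]
  rw [sum_card_fixedBy_eq_card_orbits_mul_card_group, horbits, one_mul]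

end MulAction

namespace Subgroup

variable {α : Type*} (D : Subgroup (Perm α))

theorem isMultiplyPretransitive_iff {k : ℕ} : IsMultiplyPretransitive D α k ↔
    ∀ a b : Fin k ↪ α, ∃ σ ∈ D, ∀ j, σ (a j) = b j := by
  simp only [MulAction.isMultiplyPretransitive_iff, Function.Embedding.ext_iff,
    Function.Embedding.smul_apply, Subtype.exists, Subgroup.mk_smul, Perm.smul_def, exists_prop]

end Subgroup

theorem card_fixedBy_eq_numFixedPoints {n : ℕ} {D : Subgroup (Perm (Fin n))} (σ : D) :
    Nat.card (fixedBy (Fin n) σ) = numFixedPoints (σ : Perm (Fin n)) := by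
  rw [numFixedPoints, Nat.card_eq_fintype_card, ← Fintype.card_subtype]
  rfl

theorem card_fixedBy_embedding_eq_descFactorial {n : ℕ} {D : Subgroup (Perm (Fin n))} (σ : D)
    (k : ℕ) :
    Nat.card (fixedBy (Fin k ↪ Fin n) σ) = (numFixedPoints (σ : Perm (Fin n))).descFactorial k := by
  refine (Nat.card_congr (fixedByEmbeddingEquiv (Fin k) σ)).trans ?_
  rw [Nat.card_eq_fintype_card, Fintype.card_embedding_eq, Fintype.card_fin,
    ← card_fixedBy_eq_numFixedPoints, Nat.card_eq_fintype_card]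

theorem hasSum_inv_card_mul_card_fixedBy {G X : Type*} [Group G] [MulAction G X] [Fintype G]
    [Finite X] [Nonempty X] [hX : IsPretransitive G X] :
    HasSum (fun g : G => (Nat.card G : ℝ)⁻¹ * Nat.card (fixedBy X g)) 1 := by
  convert hasSum_fintype _
  rw [← Finset.mul_sum, ← Nat.cast_sum, sum_card_fixedBy_eq_card_of_isPretransitive,
    inv_mul_cancel₀ (by simp)]

theorem hasUnitMeanAndVariance_numFixedPoints {n : ℕ} (hn : 2 ≤ n) (D : Subgroup (Perm (Fin n)))
    [IsMultiplyPretransitive D (Fin n) 2] :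
    HasUnitMeanAndVariance (fun _ : D => (Nat.card D : ℝ)⁻¹)
      (fun σ => (numFixedPoints (σ : Perm (Fin n)) : ℝ)) := by
  classical
  have : Nonempty (Fin 2 ↪ Fin n) := Function.Embedding.nonempty_of_card_le (by simpa using hn)
  have : Nonempty (Fin n) := ⟨(Classical.arbitrary (Fin 2 ↪ Fin n)) 0⟩
  have : IsPretransitive D (Fin n) := isPretransitive_of_is_two_pretransitive
  refine .of_hasSum_mul_mul_sub_one (fun _ => by positivity) ?_ ?_ ?_
  · simpa [Nat.card_eq_fintype_card] using hasSum_fintype fun _ : D => (Nat.card D : ℝ)⁻¹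
  · simpa only [card_fixedBy_eq_numFixedPoints] using
      hasSum_inv_card_mul_card_fixedBy (G := D) (X := Fin n)
  · simpa only [card_fixedBy_embedding_eq_descFactorial, Nat.cast_descFactorial_two] using
      hasSum_inv_card_mul_card_fixedBy (G := D) (X := Fin 2 ↪ Fin n) (hX := ‹_›)

theorem Subgroup.weightedCDF_uniform {G : Type*} [Group G] [Fintype G] (D : Subgroup G)
    [DecidablePred (· ∈ D)] (f : G → ℝ) (x : ℝ) :
    weightedCDF (fun _ : D => (Nat.card D : ℝ)⁻¹) (fun σ => f σ) x =
      (#{σ | σ ∈ D ∧ f σ ≤ x} : ℝ) / Nat.card D := by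
  have hcard : #{σ : D | f σ ≤ x} = #{σ | σ ∈ D ∧ f σ ≤ x} := by
    rw [← card_map (Function.Embedding.subtype _)]
    congr 1
    ext σ
    simp [and_comm]
  rw [weightedCDF, tsum_fintype, ← sum_filter, sum_const, nsmul_eq_mul, hcard, div_eq_mul_inv]

theorem one_div_one_add_lt_div_add {a s : ℝ} (ha : 1 < a) (hs : 0 < s) :
    1 / (1 + s) < a / (a + s) := by
  rw [div_lt_div_iff₀ (by positivity) (by positivity)]
  nlinarith

/-- For a 2-transitive permutation group `D` on `n` letters, the c.d.f. of the number of
fixed points of a uniform random element of `D` is within `n/(n + (1−x)²)` of the c.d.f.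
of the Poisson distribution with parameter 1. -/
theorem two_transitive_fixed_points_cdf_bound (n : ℕ) (hn : 2 ≤ n)
    (D : Subgroup (Equiv.Perm (Fin n))) [DecidablePred (· ∈ D)]
    (htrans : ∀ a b : Fin 2 ↪ Fin n, ∃ σ ∈ D, ∀ j : Fin 2, σ (a j) = b j)
    (GD P : ℝ → ℝ)
    (hGD : ∀ x : ℝ, GD x =
      ((Finset.univ.filter fun σ : Equiv.Perm (Fin n) =>
          σ ∈ D ∧ (numFixedPoints σ : ℝ) ≤ x).card : ℝ) / (Nat.card D : ℝ))
    (hP : ∀ x : ℝ, P x =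
      Real.exp (-1) * ∑' i : ℕ, if (i : ℝ) ≤ x then (1 : ℝ) / i.factorial else 0) :
    ∀ x : ℝ, |GD x - P x| < (n : ℝ) / (n + (1 - x) ^ 2) := by
  intro x
  have : IsMultiplyPretransitive D (Fin n) 2 := D.isMultiplyPretransitive_iff.mpr htrans
  have hD := hasUnitMeanAndVariance_numFixedPoints hn D
  have hGx : GD x = weightedCDF _ _ x := (hGD x).trans (D.weightedCDF_uniform _ x).symm
  have hPx : P x = weightedCDF poissonOneWeight (fun k => (k : ℝ)) x := by
    rw [hP, weightedCDF, ← tsum_mul_left]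
    exact tsum_congr fun k => by split_ifs <;> simp [poissonOneWeight, div_eq_mul_inv]
  rw [hGx, hPx]
  rcases eq_or_ne x 1 with rfl | hx
  · obtain ⟨hP0, hP1⟩ := weightedCDF_poissonOneWeight_one_mem_Ioo
    rw [sub_self, zero_pow two_ne_zero, add_zero, div_self (by positivity), abs_sub_lt_iff]
    have := hD.weightedCDF_nonneg 1
    have := hD.weightedCDF_le_one 1
    constructor <;> linarith
  · calc _ ≤ 1 / (1 + (1 - x) ^ 2) :=
          hD.abs_weightedCDF_sub_le hasUnitMeanAndVariance_poissonOneWeight hx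
      _ < n / (n + (1 - x) ^ 2) :=
          one_div_one_add_lt_div_add (by exact_mod_cast hn) (by positivity [sub_ne_zero.mpr hx.symm])
end
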